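/- arXiv:2303.13102 — 5 statements merged into one kernel-verified Lean document; each statement's English description precedes it below -/
import Mathlib

section
/- Let p ∈ Σ_m, q ∈ Σ_n, let K be a set of keypoint index pairs with mask matrix M, and suppose p_i = q_j for every (i,j) ∈ K. Then for every π ∈ Π(p,q;M) and every (i,j) ∈ K one has: (M⊙π)_{i,j'} = 0 for all j' ≠ j, (M⊙π)_{i',j} = 0 for all i' ≠ i, and (M⊙π)_{i,j} = p_i = q_j. In other words, the masked transport plan M⊙π sends all the mass of each source keypoint to its paired target keypoint, and each target keypoint receives mass only from its paired source keypoint. -/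
/-! Since keypoint rows and columns are distinct, the mask kills every other entry in the row and
the column of a keypoint, so the row and column marginal constraints there collapse to the single
keypoint entry. -/

open Finset

noncomputable section

variable {m n : ℕ}

/-- Mask matrix determined by the keypoint pair set `K`:
`M i j = 1` if `(i,j) ∈ K`; `M i j = 0` if `i ∈ I` or `j ∈ J` but `(i,j) ∉ K`;
`M i j = 1` otherwise. -/
def mask (K : Finset (Fin m × Fin n)) : Matrix (Fin m) (Fin n) ℝ :=
  fun i j =>
    if (i, j) ∈ K then 1
    else if (∃ j', (i, j') ∈ K) ∨ (∃ i', (i', j) ∈ K) then 0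
    else 1

/-- The masked feasible set `Π(p, q; M)`. -/
def PiM (M : Matrix (Fin m) (Fin n) ℝ) (p : Fin m → ℝ) (q : Fin n → ℝ) :
    Set (Matrix (Fin m) (Fin n) ℝ) :=
  {π | (∀ i j, 0 ≤ π i j) ∧ (∀ i, ∑ j, M i j * π i j = p i) ∧
    (∀ j, ∑ i, M i j * π i j = q j)}

section Mask

variable {K : Finset (Fin m × Fin n)} {i i' : Fin m} {j j' : Fin n}

theorem mask_eq_zero_of_mem_of_ne_snd (hK : ∀ a ∈ K, ∀ b ∈ K, a.1 = b.1 → a = b)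
    (hij : (i, j) ∈ K) (hj' : j' ≠ j) : mask K i j' = 0 := by
  have hnot : (i, j') ∉ K := fun h => hj' (congrArg Prod.snd (hK _ h _ hij rfl))
  simp only [mask, if_neg hnot]
  exact if_pos (Or.inl ⟨j, hij⟩)

theorem mask_eq_zero_of_mem_of_ne_fst (hK : ∀ a ∈ K, ∀ b ∈ K, a.2 = b.2 → a = b)
    (hij : (i, j) ∈ K) (hi' : i' ≠ i) : mask K i' j = 0 := by
  have hnot : (i', j) ∉ K := fun h => hi' (congrArg Prod.fst (hK _ h _ hij rfl))
  simp only [mask, if_neg hnot]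
  exact if_pos (Or.inr ⟨i, hij⟩)

end Mask

namespace PiM

variable {M : Matrix (Fin m) (Fin n) ℝ} {p : Fin m → ℝ} {q : Fin n → ℝ}
  {π : Matrix (Fin m) (Fin n) ℝ} {i : Fin m} {j : Fin n}

theorem masked_apply_eq_of_row_vanishes (hπ : π ∈ PiM M p q)
    (hrow : ∀ j', j' ≠ j → M i j' * π i j' = 0) : M i j * π i j = p i :=
  (Fintype.sum_eq_single j hrow).symm.trans (hπ.2.1 i)

theorem masked_apply_eq_of_col_vanishes (hπ : π ∈ PiM M p q)
    (hcol : ∀ i', i' ≠ i → M i' j * π i' j = 0) : M i j * π i j = q j :=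
  (Fintype.sum_eq_single i hcol).symm.trans (hπ.2.2 j)

end PiM

theorem masked_plan_preserves_keypoint_matching_general
    (p : Fin m → ℝ) (q : Fin n → ℝ) (K : Finset (Fin m × Fin n))
    (hK1 : ∀ a ∈ K, ∀ b ∈ K, a.1 = b.1 → a = b)
    (hK2 : ∀ a ∈ K, ∀ b ∈ K, a.2 = b.2 → a = b)
    (π : Matrix (Fin m) (Fin n) ℝ) (hπ : π ∈ PiM (mask K) p q) :
    ∀ ij ∈ K,
      (∀ j', j' ≠ ij.2 → mask K ij.1 j' * π ij.1 j' = 0) ∧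
      (∀ i', i' ≠ ij.1 → mask K i' ij.2 * π i' ij.2 = 0) ∧
      mask K ij.1 ij.2 * π ij.1 ij.2 = p ij.1 ∧
      mask K ij.1 ij.2 * π ij.1 ij.2 = q ij.2 := by
  rintro ⟨i, j⟩ hij
  have hrow : ∀ j', j' ≠ j → mask K i j' * π i j' = 0 := fun j' hj' => by
    rw [mask_eq_zero_of_mem_of_ne_snd hK1 hij hj', zero_mul]
  have hcol : ∀ i', i' ≠ i → mask K i' j * π i' j = 0 := fun i' hi' => by
    rw [mask_eq_zero_of_mem_of_ne_fst hK2 hij hi', zero_mul]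
  exact ⟨hrow, hcol, PiM.masked_apply_eq_of_row_vanishes hπ hrow,
    PiM.masked_apply_eq_of_col_vanishes hπ hcol⟩

/-- if `p i = q j` for every keypoint pair `(i,j) ∈ K`, then any
`π ∈ Π(p,q;M)` preserves the matching of keypoint pairs: the masked plan `M ⊙ π`
vanishes off the keypoint entry in the corresponding row and column, and the
keypoint entry carries the whole mass `p i = q j`. -/
theorem masked_plan_preserves_keypoint_matching
    (p : Fin m → ℝ) (q : Fin n → ℝ) (K : Finset (Fin m × Fin n))
    (hp : p ∈ stdSimplex ℝ (Fin m)) (hq : q ∈ stdSimplex ℝ (Fin n))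
    (hK1 : ∀ a ∈ K, ∀ b ∈ K, a.1 = b.1 → a = b)
    (hK2 : ∀ a ∈ K, ∀ b ∈ K, a.2 = b.2 → a = b)
    (hpq : ∀ ij ∈ K, p ij.1 = q ij.2)
    (π : Matrix (Fin m) (Fin n) ℝ) (hπ : π ∈ PiM (mask K) p q) :
    ∀ ij ∈ K,
      (∀ j', j' ≠ ij.2 → mask K ij.1 j' * π ij.1 j' = 0) ∧
      (∀ i', i' ≠ ij.1 → mask K i' ij.2 * π i' ij.2 = 0) ∧
      mask K ij.1 ij.2 * π ij.1 ij.2 = p ij.1 ∧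
      mask K ij.1 ij.2 * π ij.1 ij.2 = q ij.2 :=
  masked_plan_preserves_keypoint_matching_general p q K hK1 hK2 π hπ
end
end

section
/- With the extended data p̄, q̄, M̄ for the partial keypoint-guided problem, for every π̄ ∈ Π(p̄,q̄;M̄) one has Σ_{i=1}^m Σ_{j=1}^n M_{i,j} π̄_{i,j} = s + π̄_{m+1,n+1}; that is, the total mass of the upper-left m×n block of the masked plan M̄⊙π̄ equals s plus the mass placed on the dummy-to-dummy entry. -/
/-! The column constraints of the first `n` columns of `M̄ ⊙ π̄` add up to the upper-left block
plus the first `n` entries of the last row, i.e. to `‖q‖₁`; the last-row constraint says that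
those entries together with the corner carry `‖q‖₁ − s`. Subtracting gives the identity. -/

open Finset

noncomputable section

variable {m n : ℕ}

/-- Extend an `m × n` matrix by one extra column, one extra row and a corner entry. -/
def extend (B : Matrix (Fin m) (Fin n) ℝ) (col : Fin m → ℝ) (row : Fin n → ℝ)
    (corner : ℝ) : Matrix (Fin (m + 1)) (Fin (n + 1)) ℝ :=
  fun i j =>
    if hi : (i : ℕ) < m then
      if hj : (j : ℕ) < n then B ⟨i, hi⟩ ⟨j, hj⟩ else col ⟨i, hi⟩
    else if hj : (j : ℕ) < n then row ⟨j, hj⟩ else corner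

/-- Extend a vector by one extra entry. -/
def extVec (v : Fin m → ℝ) (last : ℝ) : Fin (m + 1) → ℝ :=
  fun i => if hi : (i : ℕ) < m then v ⟨i, hi⟩ else last

/-- `a i = 0` if `i ∈ I` and `1` otherwise. -/
def avec (K : Finset (Fin m × Fin n)) : Fin m → ℝ :=
  fun i => if ∃ j, (i, j) ∈ K then 0 else 1

/-- `b j = 0` if `j ∈ J` and `1` otherwise. -/
def bvec (K : Finset (Fin m × Fin n)) : Fin n → ℝ :=
  fun j => if ∃ i, (i, j) ∈ K then 0 else 1

/-- The extended mask `M̄`. -/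
def Mbar (K : Finset (Fin m × Fin n)) : Matrix (Fin (m + 1)) (Fin (n + 1)) ℝ :=
  extend (mask K) (avec K) (bvec K) 1

/-- The extended guiding matrix `Ḡ`. -/
def Gbar (G : Matrix (Fin m) (Fin n) ℝ) (ξ A : ℝ) :
    Matrix (Fin (m + 1)) (Fin (n + 1)) ℝ :=
  extend G (fun _ => ξ) (fun _ => ξ) (2 * ξ + A)

/-- The extended source weights `p̄ = (pᵀ, ‖q‖₁ − s)ᵀ`. -/
def pbar (p : Fin m → ℝ) (q : Fin n → ℝ) (s : ℝ) : Fin (m + 1) → ℝ :=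
  extVec p (∑ j, q j - s)

/-- The extended target weights `q̄ = (qᵀ, ‖p‖₁ − s)ᵀ`. -/
def qbar (p : Fin m → ℝ) (q : Fin n → ℝ) (s : ℝ) : Fin (n + 1) → ℝ :=
  extVec q (∑ i, p i - s)

@[simp]
theorem extend_castSucc_castSucc (B : Matrix (Fin m) (Fin n) ℝ) (col : Fin m → ℝ)
    (row : Fin n → ℝ) (corner : ℝ) (i : Fin m) (j : Fin n) :
    extend B col row corner i.castSucc j.castSucc = B i j := by
  simp [extend]

@[simp]
theorem extend_last_last (B : Matrix (Fin m) (Fin n) ℝ) (col : Fin m → ℝ)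
    (row : Fin n → ℝ) (corner : ℝ) :
    extend B col row corner (Fin.last m) (Fin.last n) = corner := by
  simp [extend]

@[simp]
theorem extVec_castSucc (v : Fin m → ℝ) (last : ℝ) (i : Fin m) :
    extVec v last i.castSucc = v i := by
  simp [extVec]

@[simp]
theorem extVec_last (v : Fin m → ℝ) (last : ℝ) : extVec v last (Fin.last m) = last := by
  simp [extVec]

theorem Matrix.sum_upperLeft_eq {α : Type*} [AddCommGroup α]
    (X : Matrix (Fin (m + 1)) (Fin (n + 1)) α) :
    ∑ i : Fin m, ∑ j : Fin n, X i.castSucc j.castSucc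
      = ∑ j : Fin n, ∑ i, X i j.castSucc - ∑ j, X (Fin.last m) j
        + X (Fin.last m) (Fin.last n) := by
  simp only [Fin.sum_univ_castSucc (n := m), Fin.sum_univ_castSucc (n := n),
    sum_add_distrib]
  rw [sum_comm]
  abel

theorem sum_upperLeft_of_mem_PiM {M π : Matrix (Fin (m + 1)) (Fin (n + 1)) ℝ}
    {p : Fin (m + 1) → ℝ} {q : Fin (n + 1) → ℝ} (hπ : π ∈ PiM M p q) :
    ∑ i : Fin m, ∑ j : Fin n, M i.castSucc j.castSucc * π i.castSucc j.castSucc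
      = ∑ j : Fin n, q j.castSucc - p (Fin.last m)
        + M (Fin.last m) (Fin.last n) * π (Fin.last m) (Fin.last n) := by
  obtain ⟨-, hrow, hcol⟩ := hπ
  have h := Matrix.sum_upperLeft_eq fun i j => M i j * π i j
  simp only [hrow, hcol] at h
  exact h

theorem upper_left_block_mass_general
    (p : Fin m → ℝ) (q : Fin n → ℝ) (K : Finset (Fin m × Fin n)) (s : ℝ)
    (πb : Matrix (Fin (m + 1)) (Fin (n + 1)) ℝ)
    (hπb : πb ∈ PiM (Mbar K) (pbar p q s) (qbar p q s)) :
    ∑ i : Fin m, ∑ j : Fin n, mask K i j * πb i.castSucc j.castSucc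
      = s + πb (Fin.last m) (Fin.last n) := by
  have h := sum_upperLeft_of_mem_PiM hπb
  simp only [Mbar, pbar, qbar, extend_castSucc_castSucc, extend_last_last, extVec_castSucc,
    extVec_last, one_mul] at h
  rw [h]
  ring

/-- for every `π̄ ∈ Π(p̄, q̄; M̄)`, the total mass of the upper-left
`m × n` block of the masked plan `M̄ ⊙ π̄` equals `s` plus the mass on the
dummy-to-dummy entry. -/
theorem upper_left_block_mass
    (p : Fin m → ℝ) (q : Fin n → ℝ) (K : Finset (Fin m × Fin n)) (s : ℝ)
    (hp : ∀ i, 0 ≤ p i) (hq : ∀ j, 0 ≤ q j)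
    (hK1 : ∀ a ∈ K, ∀ b ∈ K, a.1 = b.1 → a = b)
    (hK2 : ∀ a ∈ K, ∀ b ∈ K, a.2 = b.2 → a = b)
    (hs0 : 0 ≤ s) (hs : s ≤ min (∑ i, p i) (∑ j, q j))
    (πb : Matrix (Fin (m + 1)) (Fin (n + 1)) ℝ)
    (hπb : πb ∈ PiM (Mbar K) (pbar p q s) (qbar p q s)) :
    ∑ i : Fin m, ∑ j : Fin n, mask K i j * πb i.castSucc j.castSucc
      = s + πb (Fin.last m) (Fin.last n) :=
  upper_left_block_mass_general p q K s πb hπb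
end
end

section
/- Suppose the guiding matrix satisfies G_{i,j} ≥ 0 for all i,j, that A > 0, that Σ_{i∈I} p_i < s and Σ_{j∈J} q_j < s, and that Π(p̄,q̄;M̄) is nonempty. Then every minimizer π̄* of ⟨M̄⊙π̄, Ḡ⟩_F over π̄ ∈ Π(p̄,q̄;M̄) has π̄*_{m+1,n+1} = 0, i.e., at an optimum no mass is transported between the source dummy point and the target dummy point. -/
open Finset

noncomputable section

variable {m n : ℕ}

/-- Sum of a function that differs from another at exactly two points. -/
lemma sum_shift {N : ℕ} (f g : Fin N → ℝ) (a b : Fin N) (hab : a ≠ b)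
    (h : ∀ x, x ≠ a → x ≠ b → f x = g x) :
    ∑ x, f x = ∑ x, g x + ((f a - g a) + (f b - g b)) := by
  have key := Finset.sum_pair (f := fun x => f x - g x) hab
  have h1 : ∑ x, (f x - g x) = (f a - g a) + (f b - g b) := by
    rw [← key]
    refine (Finset.sum_subset (Finset.subset_univ _) ?_).symm
    intro x _ hx
    simp only [Finset.mem_insert, Finset.mem_singleton] at hx
    push_neg at hx
    rw [h x hx.1 hx.2]; ring
  have h2 : ∑ x, (f x - g x) = ∑ x, f x - ∑ x, g x := Finset.sum_sub_distrib f g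
  linarith

lemma extend_ss (B : Matrix (Fin m) (Fin n) ℝ) (c : Fin m → ℝ) (r : Fin n → ℝ)
    (k : ℝ) (i : Fin m) (j : Fin n) :
    extend B c r k i.castSucc j.castSucc = B i j := by simp [extend]

lemma extend_sl (B : Matrix (Fin m) (Fin n) ℝ) (c : Fin m → ℝ) (r : Fin n → ℝ)
    (k : ℝ) (i : Fin m) :
    extend B c r k i.castSucc (Fin.last n) = c i := by simp [extend]

lemma extend_ls (B : Matrix (Fin m) (Fin n) ℝ) (c : Fin m → ℝ) (r : Fin n → ℝ)
    (k : ℝ) (j : Fin n) :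
    extend B c r k (Fin.last m) j.castSucc = r j := by simp [extend]

lemma extend_ll (B : Matrix (Fin m) (Fin n) ℝ) (c : Fin m → ℝ) (r : Fin n → ℝ)
    (k : ℝ) : extend B c r k (Fin.last m) (Fin.last n) = k := by simp [extend]

lemma extVec_s (v : Fin m → ℝ) (x : ℝ) (i : Fin m) :
    extVec v x i.castSucc = v i := by simp [extVec]

lemma extVec_l (v : Fin m → ℝ) (x : ℝ) :
    extVec v x (Fin.last m) = x := by simp [extVec]

/-- if `G ≥ 0`, `A > 0`, `∑_{i ∈ I} p i < s`, `∑_{j ∈ J} q j < s` and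
`Π(p̄,q̄;M̄)` is nonempty, then every minimizer of `⟨M̄ ⊙ π̄, Ḡ⟩_F` over
`Π(p̄,q̄;M̄)` puts zero mass on the dummy-to-dummy entry. -/
theorem minimizer_dummy_dummy_zero
    (p : Fin m → ℝ) (q : Fin n → ℝ) (K : Finset (Fin m × Fin n)) (s : ℝ)
    (G : Matrix (Fin m) (Fin n) ℝ) (ξ A : ℝ)
    (hp : ∀ i, 0 ≤ p i) (hq : ∀ j, 0 ≤ q j)
    (hK1 : ∀ a ∈ K, ∀ b ∈ K, a.1 = b.1 → a = b)
    (hK2 : ∀ a ∈ K, ∀ b ∈ K, a.2 = b.2 → a = b)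
    (hs0 : 0 ≤ s) (hs : s ≤ min (∑ i, p i) (∑ j, q j))
    (hG : ∀ i j, 0 ≤ G i j) (hA : 0 < A)
    (hIp : ∑ i ∈ univ.filter (fun i => ∃ j, (i, j) ∈ K), p i < s)
    (hJq : ∑ j ∈ univ.filter (fun j => ∃ i, (i, j) ∈ K), q j < s)
    (hne : (PiM (Mbar K) (pbar p q s) (qbar p q s)).Nonempty)
    (πb : Matrix (Fin (m + 1)) (Fin (n + 1)) ℝ)
    (hπb : πb ∈ PiM (Mbar K) (pbar p q s) (qbar p q s))
    (hmin : ∀ π' ∈ PiM (Mbar K) (pbar p q s) (qbar p q s),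
      ∑ i, ∑ j, Mbar K i j * πb i j * Gbar G ξ A i j
        ≤ ∑ i, ∑ j, Mbar K i j * π' i j * Gbar G ξ A i j) :
    πb (Fin.last m) (Fin.last n) = 0 := by
  classical
  obtain ⟨hpos, hrow, hcol⟩ := hπb
  by_contra hne0
  have ht : 0 < πb (Fin.last m) (Fin.last n) :=
    (hpos _ _).lt_of_ne (Ne.symm hne0)
  -- row constraints restricted to the original block
  have hrow' : ∀ i : Fin m,
      (∑ j : Fin n, mask K i j * πb i.castSucc j.castSucc)
        + avec K i * πb i.castSucc (Fin.last n) = p i := by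
    intro i
    have h := hrow i.castSucc
    rw [Fin.sum_univ_castSucc] at h
    simpa only [Mbar, pbar, extend_ss, extend_sl, extVec_s] using h
  -- last column constraint
  have hcoll : (∑ i : Fin m, avec K i * πb i.castSucc (Fin.last n))
      + πb (Fin.last m) (Fin.last n) = ∑ i, p i - s := by
    have h := hcol (Fin.last n)
    rw [Fin.sum_univ_castSucc] at h
    simpa only [Mbar, qbar, extend_sl, extend_ll, extVec_l, one_mul] using h
  -- total block mass
  have hsum1 : (∑ i : Fin m, ((∑ j : Fin n, mask K i j * πb i.castSucc j.castSucc)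
      + avec K i * πb i.castSucc (Fin.last n))) = ∑ i, p i :=
    Finset.sum_congr rfl fun i _ => hrow' i
  have hsum1' : (∑ i : Fin m, ∑ j : Fin n, mask K i j * πb i.castSucc j.castSucc)
      + ∑ i : Fin m, avec K i * πb i.castSucc (Fin.last n) = ∑ i, p i := by
    rw [← Finset.sum_add_distrib]; exact hsum1
  have hS : ∑ i : Fin m, ∑ j : Fin n, mask K i j * πb i.castSucc j.castSucc
      = s + πb (Fin.last m) (Fin.last n) := by linarith
  -- split the block mass over keypoint rows and free rows
  have hsplit := Finset.sum_filter_add_sum_filter_not univ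
    (fun i : Fin m => ∃ j, (i, j) ∈ K)
    (fun i => ∑ j : Fin n, mask K i j * πb i.castSucc j.castSucc)
  have hIeq : ∑ i ∈ univ.filter (fun i : Fin m => ∃ j, (i, j) ∈ K),
      (∑ j : Fin n, mask K i j * πb i.castSucc j.castSucc)
      = ∑ i ∈ univ.filter (fun i => ∃ j, (i, j) ∈ K), p i := by
    refine Finset.sum_congr rfl fun i hi => ?_
    rw [Finset.mem_filter] at hi
    have h0 : avec K i = 0 := by simp [avec, hi.2]
    have h1 := hrow' i
    rw [h0, zero_mul, add_zero] at h1
    exact h1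
  have hrest : 0 < ∑ i ∈ univ.filter (fun i : Fin m => ¬∃ j, (i, j) ∈ K),
      ∑ j : Fin n, mask K i j * πb i.castSucc j.castSucc := by linarith
  -- find a free entry carrying positive mass
  obtain ⟨i₀, hi₀mem, hi₀pos⟩ : ∃ i ∈ univ.filter (fun i : Fin m => ¬∃ j, (i, j) ∈ K),
      0 < ∑ j : Fin n, mask K i j * πb i.castSucc j.castSucc := by
    by_contra hcon
    have hall : ∀ i ∈ univ.filter (fun i : Fin m => ¬∃ j, (i, j) ∈ K),
        (∑ j : Fin n, mask K i j * πb i.castSucc j.castSucc) ≤ 0 :=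
      fun i hi => le_of_not_gt fun h => hcon ⟨i, hi, h⟩
    have := Finset.sum_nonpos hall
    linarith
  have hi₀ : ¬∃ j, (i₀, j) ∈ K := (Finset.mem_filter.mp hi₀mem).2
  obtain ⟨j₀, hj₀pos⟩ : ∃ j, 0 < mask K i₀ j * πb i₀.castSucc j.castSucc := by
    by_contra hcon
    have hall : ∀ j : Fin n, mask K i₀ j * πb i₀.castSucc j.castSucc ≤ 0 :=
      fun j => le_of_not_gt fun h => hcon ⟨j, h⟩
    have := Finset.sum_nonpos (fun j (_ : j ∈ (univ : Finset (Fin n))) => hall j)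
    linarith
  have hiK : (i₀, j₀) ∉ K := fun h => hi₀ ⟨j₀, h⟩
  have hj₀ : ¬∃ i', (i', j₀) ∈ K := by
    intro hJ
    have h0 : mask K i₀ j₀ = 0 := by simp [mask, hiK, hJ]
    rw [h0, zero_mul] at hj₀pos
    exact lt_irrefl 0 hj₀pos
  have hmask1 : mask K i₀ j₀ = 1 := by simp [mask, hiK, hi₀, hj₀]
  have hπpos : 0 < πb i₀.castSucc j₀.castSucc := by
    rw [hmask1, one_mul] at hj₀pos; exact hj₀pos
  -- the perturbation amount
  set ε : ℝ := min (πb (Fin.last m) (Fin.last n)) (πb i₀.castSucc j₀.castSucc) with hεdef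
  have hε : 0 < ε := lt_min ht hπpos
  have hε1 : ε ≤ πb (Fin.last m) (Fin.last n) := min_le_left _ _
  have hε2 : ε ≤ πb i₀.castSucc j₀.castSucc := min_le_right _ _
  have hil : (i₀.castSucc : Fin (m + 1)) ≠ Fin.last m := (Fin.castSucc_lt_last i₀).ne
  have hjl : (j₀.castSucc : Fin (n + 1)) ≠ Fin.last n := (Fin.castSucc_lt_last j₀).ne
  -- the perturbed plan
  set π' : Matrix (Fin (m + 1)) (Fin (n + 1)) ℝ := fun i j =>
    if i = i₀.castSucc ∧ j = j₀.castSucc then πb i j - ε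
    else if i = i₀.castSucc ∧ j = Fin.last n then πb i j + ε
    else if i = Fin.last m ∧ j = j₀.castSucc then πb i j + ε
    else if i = Fin.last m ∧ j = Fin.last n then πb i j - ε
    else πb i j with hπ'def
  have v1 : π' i₀.castSucc j₀.castSucc = πb i₀.castSucc j₀.castSucc - ε := by
    simp [hπ'def]
  have v2 : π' i₀.castSucc (Fin.last n) = πb i₀.castSucc (Fin.last n) + ε := by
    simp [hπ'def, Ne.symm hjl]
  have v3 : π' (Fin.last m) j₀.castSucc = πb (Fin.last m) j₀.castSucc + ε := by
    simp [hπ'def, Ne.symm hil]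
  have v4 : π' (Fin.last m) (Fin.last n) = πb (Fin.last m) (Fin.last n) - ε := by
    simp [hπ'def, Ne.symm hil, Ne.symm hjl]
  have voff_row : ∀ (i : Fin (m + 1)) (j : Fin (n + 1)),
      i ≠ i₀.castSucc → i ≠ Fin.last m → π' i j = πb i j := by
    intro i j h1 h2; simp [hπ'def, h1, h2]
  have voff_col : ∀ (i : Fin (m + 1)) (j : Fin (n + 1)),
      j ≠ j₀.castSucc → j ≠ Fin.last n → π' i j = πb i j := by
    intro i j h1 h2; simp [hπ'def, h1, h2]
  -- mask and cost values at the four modified entries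
  have M1 : Mbar K i₀.castSucc j₀.castSucc = 1 := by
    rw [Mbar, extend_ss]; exact hmask1
  have M2 : Mbar K i₀.castSucc (Fin.last n) = 1 := by
    rw [Mbar, extend_sl]; simp [avec, hi₀]
  have M3 : Mbar K (Fin.last m) j₀.castSucc = 1 := by
    rw [Mbar, extend_ls]; simp [bvec, hj₀]
  have M4 : Mbar K (Fin.last m) (Fin.last n) = 1 := by
    rw [Mbar, extend_ll]
  have G1 : Gbar G ξ A i₀.castSucc j₀.castSucc = G i₀ j₀ := by
    rw [Gbar, extend_ss]
  have G2 : Gbar G ξ A i₀.castSucc (Fin.last n) = ξ := by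
    rw [Gbar, extend_sl]
  have G3 : Gbar G ξ A (Fin.last m) j₀.castSucc = ξ := by
    rw [Gbar, extend_ls]
  have G4 : Gbar G ξ A (Fin.last m) (Fin.last n) = 2 * ξ + A := by
    rw [Gbar, extend_ll]
  -- feasibility of the perturbed plan
  have hfeas : π' ∈ PiM (Mbar K) (pbar p q s) (qbar p q s) := by
    refine ⟨?_, ?_, ?_⟩
    · intro i j
      simp only [hπ'def]
      split_ifs with h1 h2 h3 h4
      · obtain ⟨hi, hj⟩ := h1; subst hi; subst hj; linarith
      · linarith [hpos i j]
      · linarith [hpos i j]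
      · obtain ⟨hi, hj⟩ := h4; subst hi; subst hj; linarith
      · exact hpos i j
    · intro i
      by_cases h1 : i = i₀.castSucc
      · subst h1
        have hoff : ∀ x : Fin (n + 1), x ≠ j₀.castSucc → x ≠ Fin.last n →
            Mbar K i₀.castSucc x * π' i₀.castSucc x
              = Mbar K i₀.castSucc x * πb i₀.castSucc x := by
          intro x hx1 hx2; rw [voff_col _ x hx1 hx2]
        rw [sum_shift _ _ j₀.castSucc (Fin.last n) hjl hoff, M1, M2, v1, v2,
          ← hrow i₀.castSucc]
        ring
      · by_cases h2 : i = Fin.last m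
        · subst h2
          have hoff : ∀ x : Fin (n + 1), x ≠ j₀.castSucc → x ≠ Fin.last n →
              Mbar K (Fin.last m) x * π' (Fin.last m) x
                = Mbar K (Fin.last m) x * πb (Fin.last m) x := by
            intro x hx1 hx2; rw [voff_col _ x hx1 hx2]
          rw [sum_shift _ _ j₀.castSucc (Fin.last n) hjl hoff, M3, M4, v3, v4,
            ← hrow (Fin.last m)]
          ring
        · rw [← hrow i]
          exact Finset.sum_congr rfl fun j _ => by rw [voff_row i j h1 h2]
    · intro j
      by_cases h1 : j = j₀.castSucc
      · subst h1
        have hoff : ∀ x : Fin (m + 1), x ≠ i₀.castSucc → x ≠ Fin.last m →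
            Mbar K x j₀.castSucc * π' x j₀.castSucc
              = Mbar K x j₀.castSucc * πb x j₀.castSucc := by
          intro x hx1 hx2; rw [voff_row x _ hx1 hx2]
        rw [sum_shift _ _ i₀.castSucc (Fin.last m) hil hoff, M1, M3, v1, v3,
          ← hcol j₀.castSucc]
        ring
      · by_cases h2 : j = Fin.last n
        · subst h2
          have hoff : ∀ x : Fin (m + 1), x ≠ i₀.castSucc → x ≠ Fin.last m →
              Mbar K x (Fin.last n) * π' x (Fin.last n)
                = Mbar K x (Fin.last n) * πb x (Fin.last n) := by
            intro x hx1 hx2; rw [voff_row x _ hx1 hx2]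
          rw [sum_shift _ _ i₀.castSucc (Fin.last m) hil hoff, M2, M4, v2, v4,
            ← hcol (Fin.last n)]
          ring
        · rw [← hcol j]
          exact Finset.sum_congr rfl fun i _ => by rw [voff_col i j h1 h2]
  -- cost strictly decreases
  have houter : ∀ x : Fin (m + 1), x ≠ i₀.castSucc → x ≠ Fin.last m →
      (∑ j, Mbar K x j * π' x j * Gbar G ξ A x j)
        = ∑ j, Mbar K x j * πb x j * Gbar G ξ A x j :=
    fun x hx1 hx2 => Finset.sum_congr rfl fun j _ => by rw [voff_row x j hx1 hx2]
  have e1 : ∑ j, Mbar K i₀.castSucc j * π' i₀.castSucc j * Gbar G ξ A i₀.castSucc j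
      = (∑ j, Mbar K i₀.castSucc j * πb i₀.castSucc j * Gbar G ξ A i₀.castSucc j)
        + (- ε * G i₀ j₀ + ε * ξ) := by
    have hoff : ∀ x : Fin (n + 1), x ≠ j₀.castSucc → x ≠ Fin.last n →
        Mbar K i₀.castSucc x * π' i₀.castSucc x * Gbar G ξ A i₀.castSucc x
          = Mbar K i₀.castSucc x * πb i₀.castSucc x * Gbar G ξ A i₀.castSucc x := by
      intro x hx1 hx2; rw [voff_col _ x hx1 hx2]
    rw [sum_shift _ _ j₀.castSucc (Fin.last n) hjl hoff, M1, M2, v1, v2, G1, G2]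
    ring
  have e2 : ∑ j, Mbar K (Fin.last m) j * π' (Fin.last m) j * Gbar G ξ A (Fin.last m) j
      = (∑ j, Mbar K (Fin.last m) j * πb (Fin.last m) j * Gbar G ξ A (Fin.last m) j)
        + (ε * ξ - ε * (2 * ξ + A)) := by
    have hoff : ∀ x : Fin (n + 1), x ≠ j₀.castSucc → x ≠ Fin.last n →
        Mbar K (Fin.last m) x * π' (Fin.last m) x * Gbar G ξ A (Fin.last m) x
          = Mbar K (Fin.last m) x * πb (Fin.last m) x * Gbar G ξ A (Fin.last m) x := by
      intro x hx1 hx2; rw [voff_col _ x hx1 hx2]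
    rw [sum_shift _ _ j₀.castSucc (Fin.last n) hjl hoff, M3, M4, v3, v4, G3, G4]
    ring
  have hcost : ∑ i, ∑ j, Mbar K i j * π' i j * Gbar G ξ A i j
      = (∑ i, ∑ j, Mbar K i j * πb i j * Gbar G ξ A i j) - ε * (G i₀ j₀ + A) := by
    rw [sum_shift (fun i => ∑ j, Mbar K i j * π' i j * Gbar G ξ A i j)
      (fun i => ∑ j, Mbar K i j * πb i j * Gbar G ξ A i j)
      i₀.castSucc (Fin.last m) hil houter]
    rw [e1, e2]
    ring
  have hle := hmin π' hfeas
  have hpos' : 0 < ε * (G i₀ j₀ + A) := mul_pos hε (by linarith [hG i₀ j₀])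
  linarith
end
end

section
/- (Strong duality for L2-regularized KPG-RL.) Assume p_i > 0 for all i, q_j > 0 for all j, ε > 0, and Π(p,q;M) ≠ ∅. The primal value P = min_{π ∈ Π(p,q;M)} [ Σ_{i,j} M_{i,j}π_{i,j}G_{i,j} + ε Σ_{i,j} (M_{i,j}π_{i,j})²/(p_i q_j) ] equals the dual value sup over φ ∈ ℝ^m and ψ ∈ ℝ^n of D(φ,ψ) = Σ_i φ_i p_i + Σ_j ψ_j q_j − (1/(4ε)) Σ_{i,j} M_{i,j} ((φ_i + ψ_j − G_{i,j})_+)² p_i q_j, where (a)_+ = max(a,0); moreover the dual supremum is attained. -/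
open Finset

noncomputable section

variable {m n : ℕ}

/-- The `L₂`-regularized KPG-RL primal objective
`Σ_{i,j} M_{i,j} π_{i,j} G_{i,j} + ε Σ_{i,j} (M_{i,j} π_{i,j})² / (p_i q_j)`. -/
def primObj (K : Finset (Fin m × Fin n)) (G : Matrix (Fin m) (Fin n) ℝ) (ε : ℝ)
    (p : Fin m → ℝ) (q : Fin n → ℝ) (π : Matrix (Fin m) (Fin n) ℝ) : ℝ :=
  ∑ i, ∑ j, mask K i j * π i j * G i j
    + ε * ∑ i, ∑ j, (mask K i j * π i j) ^ 2 / (p i * q j)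

/-- The dual objective
`Σ_i φ_i p_i + Σ_j ψ_j q_j − (1/(4ε)) Σ_{i,j} M_{i,j} ((φ_i + ψ_j − G_{i,j})₊)² p_i q_j`. -/
def dualObj (K : Finset (Fin m × Fin n)) (G : Matrix (Fin m) (Fin n) ℝ) (ε : ℝ)
    (p : Fin m → ℝ) (q : Fin n → ℝ) (φ : Fin m → ℝ) (ψ : Fin n → ℝ) : ℝ :=
  ∑ i, φ i * p i + ∑ j, ψ j * q j
    - (1 / (4 * ε)) * ∑ i, ∑ j,
        mask K i j * max (φ i + ψ j - G i j) 0 ^ 2 * (p i * q j)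



/-- derivative of `x ↦ (max x 0)^2`. -/
lemma hasDerivAt_maxsq (x : ℝ) : HasDerivAt (fun y : ℝ => max y 0 ^ 2) (2 * max x 0) x := by
  rcases lt_trichotomy x 0 with hx | hx | hx
  · have h0 : (fun y : ℝ => max y 0 ^ 2) =ᶠ[nhds x] fun _ => (0:ℝ) := by
      filter_upwards [eventually_lt_nhds hx] with y hy
      simp [max_eq_right hy.le]
    have h1 : HasDerivAt (fun _ : ℝ => (0:ℝ)) 0 x := hasDerivAt_const x 0
    have h2 := h1.congr_of_eventuallyEq h0
    simpa [max_eq_right hx.le] using h2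
  · subst hx
    rw [hasDerivAt_iff_isLittleO]
    simp only [max_self, mul_zero, smul_zero, sub_zero]
    rw [Asymptotics.isLittleO_iff]
    intro c hc
    filter_upwards [Metric.ball_mem_nhds (0:ℝ) hc] with y hy
    have h1 : |max y 0| ≤ |y| := by
      rcases le_or_gt y 0 with h | h
      · simp [max_eq_right h]
      · simp [max_eq_left h.le]
    have h2 : |y| < c := by simpa [Real.dist_eq] using hy
    have h4 : |max y 0| * |max y 0| ≤ c * |y| :=
      mul_le_mul (le_of_lt (lt_of_le_of_lt h1 h2)) h1 (abs_nonneg _) hc.le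
    calc ‖max y 0 ^ 2 - (0:ℝ) ^ 2‖ = |max y 0| * |max y 0| := by
          simp [sq, abs_mul]
      _ ≤ c * |y| := h4
      _ = c * ‖y‖ := by simp
  · have h0 : (fun y : ℝ => max y 0 ^ 2) =ᶠ[nhds x] fun y => y ^ 2 := by
      filter_upwards [eventually_gt_nhds hx] with y hy
      simp [max_eq_left hy.le]
    have h1 : HasDerivAt (fun y : ℝ => y ^ 2) (2 * x) x := by
      simpa using hasDerivAt_pow 2 x
    have h2 := h1.congr_of_eventuallyEq h0
    simpa [max_eq_left hx.le] using h2

/-- termwise weak duality inequality -/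
lemma term_weak (t g x c ε : ℝ) (hx : 0 ≤ x) (hc : 0 < c) (hε : 0 < ε) :
    (t + g) * x - (1/(4*ε)) * (max t 0 ^ 2) * c ≤ x * g + ε * x^2 / c := by
  have h1 : t * x ≤ max t 0 * x := mul_le_mul_of_nonneg_right (le_max_left _ _) hx
  have h3 : max t 0 * x ≤ (1/(4*ε)) * (max t 0 ^2) * c + ε * x^2 / c := by
    have e1 : (1/(4*ε)) * (max t 0^2) * c + ε*x^2/c - max t 0 * x
        = (2*ε*x - c*max t 0)^2 / (4*ε*c) := by
      field_simp
      ring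
    rw [← sub_nonneg, e1]
    positivity
  nlinarith [h1, h3]

/-- `max t 0 * t = max t 0 ^ 2` -/
lemma max_mul_self (t : ℝ) : max t 0 * t = max t 0 ^ 2 := by
  rcases le_or_gt t 0 with h | h
  · simp [max_eq_right h]
  · rw [max_eq_left h.le]; ring


def Pm (M G : Matrix (Fin m) (Fin n) ℝ) (ε : ℝ) (p : Fin m → ℝ) (q : Fin n → ℝ)
    (π : Matrix (Fin m) (Fin n) ℝ) : ℝ :=
  ∑ i, ∑ j, M i j * π i j * G i j + ε * ∑ i, ∑ j, (M i j * π i j) ^ 2 / (p i * q j)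

def Dm (M G : Matrix (Fin m) (Fin n) ℝ) (ε : ℝ) (p : Fin m → ℝ) (q : Fin n → ℝ)
    (φ : Fin m → ℝ) (ψ : Fin n → ℝ) : ℝ :=
  ∑ i, φ i * p i + ∑ j, ψ j * q j
    - (1 / (4 * ε)) * ∑ i, ∑ j, M i j * max (φ i + ψ j - G i j) 0 ^ 2 * (p i * q j)


/-- rewrite the linear part of the dual using a feasible plan -/
lemma linrw (M : Matrix (Fin m) (Fin n) ℝ) (p : Fin m → ℝ) (q : Fin n → ℝ)
    (π : Matrix (Fin m) (Fin n) ℝ) (hπ : π ∈ PiM M p q)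
    (φ : Fin m → ℝ) (ψ : Fin n → ℝ) :
    ∑ i, φ i * p i + ∑ j, ψ j * q j
      = ∑ i, ∑ j, M i j * π i j * (φ i + ψ j) := by
  have h1 : ∑ i, φ i * p i = ∑ i, ∑ j, M i j * π i j * φ i := by
    refine Finset.sum_congr rfl fun i _ => ?_
    rw [← hπ.2.1 i, Finset.mul_sum]
    exact Finset.sum_congr rfl fun j _ => mul_comm _ _
  have h2 : ∑ j, ψ j * q j = ∑ i, ∑ j, M i j * π i j * ψ j := by
    rw [Finset.sum_comm]
    refine Finset.sum_congr rfl fun j _ => ?_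
    rw [← hπ.2.2 j, Finset.mul_sum]
    exact Finset.sum_congr rfl fun i _ => mul_comm _ _
  rw [h1, h2, ← Finset.sum_add_distrib]
  refine Finset.sum_congr rfl fun i _ => ?_
  rw [← Finset.sum_add_distrib]
  exact Finset.sum_congr rfl fun j _ => by ring

lemma weak_dual (M G : Matrix (Fin m) (Fin n) ℝ) (ε : ℝ) (p : Fin m → ℝ) (q : Fin n → ℝ)
    (hp : ∀ i, 0 < p i) (hq : ∀ j, 0 < q j) (hε : 0 < ε)
    (hM : ∀ i j, M i j = 0 ∨ M i j = 1)
    (φ : Fin m → ℝ) (ψ : Fin n → ℝ)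
    (π : Matrix (Fin m) (Fin n) ℝ) (hπ : π ∈ PiM M p q) :
    Dm M G ε p q φ ψ ≤ Pm M G ε p q π := by
  unfold Dm Pm
  rw [linrw M p q π hπ φ ψ, Finset.mul_sum, Finset.mul_sum, ← Finset.sum_sub_distrib,
    ← Finset.sum_add_distrib]
  refine Finset.sum_le_sum fun i _ => ?_
  rw [Finset.mul_sum, Finset.mul_sum, ← Finset.sum_sub_distrib, ← Finset.sum_add_distrib]
  refine Finset.sum_le_sum fun j _ => ?_
  rcases hM i j with h | h
  · simp [h]
  · simp only [h, one_mul]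
    have hc : 0 < p i * q j := mul_pos (hp i) (hq j)
    have := term_weak (φ i + ψ j - G i j) (G i j) (π i j) (p i * q j) ε (hπ.1 i j) hc hε
    have e : φ i + ψ j - G i j + G i j = φ i + ψ j := by ring
    rw [e] at this
    ring_nf at this ⊢
    linarith [this]

/-- the lineality subspace of the dual -/
def Lsub (M : Matrix (Fin m) (Fin n) ℝ) : Submodule ℝ ((Fin m → ℝ) × (Fin n → ℝ)) where
  carrier := {w | ∀ i j, M i j = 1 → w.1 i + w.2 j = 0}
  add_mem' := by
    intro a b ha hb i j h
    have h1 := ha i j h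
    have h2 := hb i j h
    simp only [Prod.fst_add, Prod.snd_add, Pi.add_apply]
    linarith
  zero_mem' := by intro i j h; simp
  smul_mem' := by
    intro c a ha i j h
    have h1 := ha i j h
    simp only [Prod.smul_fst, Prod.smul_snd, Pi.smul_apply, smul_eq_mul]
    rw [← mul_add, h1, mul_zero]

def gfun (M xb : Matrix (Fin m) (Fin n) ℝ) (w : (Fin m → ℝ) × (Fin n → ℝ)) : ℝ :=
  ∑ i, ∑ j, M i j * xb i j * |w.1 i + w.2 j|

lemma Dm_inv (M G : Matrix (Fin m) (Fin n) ℝ) (ε : ℝ) (p : Fin m → ℝ) (q : Fin n → ℝ)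
    (hM : ∀ i j, M i j = 0 ∨ M i j = 1)
    (xb : Matrix (Fin m) (Fin n) ℝ) (hxb : xb ∈ PiM M p q)
    (l : (Fin m → ℝ) × (Fin n → ℝ)) (hl : l ∈ Lsub M) (φ : Fin m → ℝ) (ψ : Fin n → ℝ) :
    Dm M G ε p q (l.1 + φ) (l.2 + ψ) = Dm M G ε p q φ ψ := by
  have hα : ∑ i, l.1 i * p i + ∑ j, l.2 j * q j = 0 := by
    rw [linrw M p q xb hxb l.1 l.2]
    refine Finset.sum_eq_zero fun i _ => Finset.sum_eq_zero fun j _ => ?_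
    rcases hM i j with h | h
    · simp [h]
    · rw [hl i j h, mul_zero]
  unfold Dm
  have e1 : ∑ i, (l.1 + φ) i * p i = ∑ i, l.1 i * p i + ∑ i, φ i * p i := by
    rw [← Finset.sum_add_distrib]
    exact Finset.sum_congr rfl fun i _ => by simp [Pi.add_apply]; ring
  have e2 : ∑ j, (l.2 + ψ) j * q j = ∑ j, l.2 j * q j + ∑ j, ψ j * q j := by
    rw [← Finset.sum_add_distrib]
    exact Finset.sum_congr rfl fun j _ => by simp [Pi.add_apply]; ring
  have e3 : ∀ i j, M i j * max ((l.1 + φ) i + (l.2 + ψ) j - G i j) 0 ^ 2 * (p i * q j)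
      = M i j * max (φ i + ψ j - G i j) 0 ^ 2 * (p i * q j) := by
    intro i j
    rcases hM i j with h | h
    · simp [h]
    · have := hl i j h
      have e : (l.1 + φ) i + (l.2 + ψ) j - G i j = φ i + ψ j - G i j := by
        simp only [Pi.add_apply]; linarith
      rw [e]
  rw [e1, e2]
  have e4 : (∑ i, ∑ j, M i j * max ((l.1 + φ) i + (l.2 + ψ) j - G i j) 0 ^ 2 * (p i * q j))
      = ∑ i, ∑ j, M i j * max (φ i + ψ j - G i j) 0 ^ 2 * (p i * q j) :=
    Finset.sum_congr rfl fun i _ => Finset.sum_congr rfl fun j _ => e3 i j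
  rw [e4]
  ring_nf
  linarith [hα]

/-- coercivity: `Dm ≤ C - gfun` -/
lemma Dm_coercive (M G : Matrix (Fin m) (Fin n) ℝ) (ε : ℝ) (p : Fin m → ℝ) (q : Fin n → ℝ)
    (hp : ∀ i, 0 < p i) (hq : ∀ j, 0 < q j) (hε : 0 < ε)
    (hM : ∀ i j, M i j = 0 ∨ M i j = 1)
    (xb : Matrix (Fin m) (Fin n) ℝ) (hxb : xb ∈ PiM M p q)
    (φ : Fin m → ℝ) (ψ : Fin n → ℝ) :
    Dm M G ε p q φ ψ ≤
      (∑ i, ∑ j, M i j * (2 * xb i j * |G i j| + 4 * ε * xb i j ^ 2 / (p i * q j)))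
        - gfun M xb (φ, ψ) := by
  unfold Dm gfun
  rw [linrw M p q xb hxb φ ψ, Finset.mul_sum, ← Finset.sum_sub_distrib, ← Finset.sum_sub_distrib]
  refine Finset.sum_le_sum fun i _ => ?_
  rw [Finset.mul_sum, ← Finset.sum_sub_distrib, ← Finset.sum_sub_distrib]
  refine Finset.sum_le_sum fun j _ => ?_
  rcases hM i j with h | h
  · simp [h]
  · simp only [h, one_mul]
    set a := φ i + ψ j with ha
    set c := p i * q j with hcdef
    have hc : 0 < c := mul_pos (hp i) (hq j)
    have hx0 : 0 ≤ xb i j := hxb.1 i j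
    rcases le_or_gt a 0 with hA | hA
    · have habs : |a| = -a := abs_of_nonpos hA
      rw [habs]
      have h1 : 0 ≤ 1 / (4*ε) * (max (a - G i j) 0 ^2 * c) := by positivity
      have h2 : 0 ≤ 2 * xb i j * |G i j| + 4 * ε * xb i j ^2 / c := by positivity
      nlinarith [h1, h2]
    · have habs : |a| = a := abs_of_pos hA
      rw [habs]
      have hG : G i j ≤ |G i j| := le_abs_self _
      rcases le_or_gt (a - G i j) 0 with hs | hs
      · rw [max_eq_right hs]
        have : a ≤ |G i j| := by linarith
        nlinarith [hx0, mul_le_mul_of_nonneg_left this hx0, sq_nonneg (xb i j),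
          (by positivity : (0:ℝ) ≤ 4 * ε * xb i j ^2 / c)]
      · rw [max_eq_left hs.le]
        set s := a - G i j with hsd
        have e : (1/(4*ε)) * (s^2 * c) + 4*ε*xb i j^2/c - 2*xb i j*s
            = (s*c - 4*ε*xb i j)^2 / (4*ε*c) := by
          field_simp
          ring
        have h5 : 0 ≤ (s*c - 4*ε*xb i j)^2 / (4*ε*c) := by positivity
        rw [← e] at h5
        have h6 : xb i j * G i j ≤ xb i j * |G i j| := mul_le_mul_of_nonneg_left hG hx0
        nlinarith [h5, h6]

lemma gfun_nonneg (M xb : Matrix (Fin m) (Fin n) ℝ)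
    (hM : ∀ i j, M i j = 0 ∨ M i j = 1) (hxb : ∀ i j, 0 ≤ xb i j) (w) :
    0 ≤ gfun M xb w := by
  refine Finset.sum_nonneg fun i _ => Finset.sum_nonneg fun j _ => ?_
  rcases hM i j with h | h
  · simp [h]
  · simp only [h, one_mul]
    exact mul_nonneg (hxb i j) (abs_nonneg _)

lemma gfun_zero (M xb : Matrix (Fin m) (Fin n) ℝ) : gfun M xb 0 = 0 := by
  simp [gfun]

lemma gfun_smul (M xb : Matrix (Fin m) (Fin n) ℝ) (c : ℝ) (hc : 0 ≤ c) (w) :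
    gfun M xb (c • w) = c * gfun M xb w := by
  unfold gfun
  rw [Finset.mul_sum]
  refine Finset.sum_congr rfl fun i _ => ?_
  rw [Finset.mul_sum]
  refine Finset.sum_congr rfl fun j _ => ?_
  have : (c • w).1 i + (c • w).2 j = c * (w.1 i + w.2 j) := by
    simp only [Prod.smul_fst, Prod.smul_snd, Pi.smul_apply, smul_eq_mul]; ring
  rw [this, abs_mul, abs_of_nonneg hc]
  ring

lemma gfun_eq_zero_mem (M xb : Matrix (Fin m) (Fin n) ℝ)
    (hM : ∀ i j, M i j = 0 ∨ M i j = 1) (hxb : ∀ i j, 0 ≤ xb i j)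
    (hxbpos : ∀ i j, M i j = 1 → 0 < xb i j)
    (w) (hw : gfun M xb w = 0) : w ∈ Lsub M := by
  intro i j hij
  have hnn : ∀ i' ∈ (univ : Finset (Fin m)),
      0 ≤ ∑ j', M i' j' * xb i' j' * |w.1 i' + w.2 j'| := by
    intro i' _
    refine Finset.sum_nonneg fun j' _ => ?_
    rcases hM i' j' with h | h
    · simp [h]
    · simp only [h, one_mul]; exact mul_nonneg (hxb i' j') (abs_nonneg _)
  have h1 := (Finset.sum_eq_zero_iff_of_nonneg hnn).mp hw i (Finset.mem_univ i)
  have hnn2 : ∀ j' ∈ (univ : Finset (Fin n)), 0 ≤ M i j' * xb i j' * |w.1 i + w.2 j'| := by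
    intro j' _
    rcases hM i j' with h | h
    · simp [h]
    · simp only [h, one_mul]; exact mul_nonneg (hxb i j') (abs_nonneg _)
  have h2 := (Finset.sum_eq_zero_iff_of_nonneg hnn2).mp h1 j (Finset.mem_univ j)
  rw [hij, one_mul] at h2
  have := hxbpos i j hij
  have habs : |w.1 i + w.2 j| = 0 := by
    rcases mul_eq_zero.mp h2 with h | h
    · exact absurd h (ne_of_gt this)
    · exact h
  exact abs_eq_zero.mp habs

lemma gfun_continuous (M xb : Matrix (Fin m) (Fin n) ℝ) : Continuous (gfun M xb) := by
  refine continuous_finset_sum _ fun i _ => continuous_finset_sum _ fun j _ => ?_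
  exact continuous_const.mul
    (((continuous_apply i).comp continuous_fst).add ((continuous_apply j).comp continuous_snd)).abs

lemma Dm_continuous (M G : Matrix (Fin m) (Fin n) ℝ) (ε : ℝ) (p : Fin m → ℝ) (q : Fin n → ℝ) :
    Continuous (fun w : (Fin m → ℝ) × (Fin n → ℝ) => Dm M G ε p q w.1 w.2) := by
  unfold Dm
  refine Continuous.sub (Continuous.add ?_ ?_) (Continuous.mul continuous_const ?_)
  · exact continuous_finset_sum _ fun i _ =>
      ((continuous_apply i).comp continuous_fst).mul continuous_const
  · exact continuous_finset_sum _ fun j _ =>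
      ((continuous_apply j).comp continuous_snd).mul continuous_const
  · refine continuous_finset_sum _ fun i _ => continuous_finset_sum _ fun j _ => ?_
    refine (continuous_const.mul ?_).mul continuous_const
    refine Continuous.pow ?_ 2
    exact ((((continuous_apply i).comp continuous_fst).add
      ((continuous_apply j).comp continuous_snd)).sub continuous_const).max continuous_const

lemma Dm_exists_max (M G : Matrix (Fin m) (Fin n) ℝ) (ε : ℝ) (p : Fin m → ℝ) (q : Fin n → ℝ)
    (hp : ∀ i, 0 < p i) (hq : ∀ j, 0 < q j) (hε : 0 < ε)
    (hM : ∀ i j, M i j = 0 ∨ M i j = 1)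
    (xb : Matrix (Fin m) (Fin n) ℝ) (hxb : xb ∈ PiM M p q)
    (hxbpos : ∀ i j, M i j = 1 → 0 < xb i j) :
    ∃ w : (Fin m → ℝ) × (Fin n → ℝ), ∀ z : (Fin m → ℝ) × (Fin n → ℝ),
      Dm M G ε p q z.1 z.2 ≤ Dm M G ε p q w.1 w.2 := by
  set E := (Fin m → ℝ) × (Fin n → ℝ)
  set D : E → ℝ := fun w => Dm M G ε p q w.1 w.2 with hDdef
  set g : E → ℝ := gfun M xb with hgdef
  set C : ℝ := ∑ i, ∑ j, M i j * (2 * xb i j * |G i j| + 4 * ε * xb i j ^ 2 / (p i * q j))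
    with hCdef
  have hcoerc : ∀ w : E, D w ≤ C - g w := fun w =>
    Dm_coercive M G ε p q hp hq hε hM xb hxb w.1 w.2
  obtain ⟨V, hV⟩ := Submodule.exists_isCompl (Lsub M)
  have hVclosed : IsClosed (V : Set E) := V.closed_of_finiteDimensional
  -- the key lower bound for g on V
  have hδ : ∃ δ > 0, ∀ w ∈ V, δ * ‖w‖ ≤ g w := by
    set T : Set E := Metric.sphere (0:E) 1 ∩ V with hTdef
    have hT : IsCompact T := (isCompact_sphere (0:E) 1).inter_right hVclosed
    have hsphere_mem : ∀ w : E, w ≠ 0 → (‖w‖⁻¹ • w ∈ Metric.sphere (0:E) 1) := by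
      intro w hw
      have : ‖w‖ ≠ 0 := norm_ne_zero_iff.mpr hw
      simp [norm_smul, abs_of_nonneg (norm_nonneg w), inv_mul_cancel₀ this]
    rcases T.eq_empty_or_nonempty with hTe | hTne
    · refine ⟨1, one_pos, fun w hw => ?_⟩
      by_cases hw0 : w = 0
      · simp [hw0, hgdef, gfun_zero]
      · exfalso
        have hmem : ‖w‖⁻¹ • w ∈ T :=
          ⟨hsphere_mem w hw0, V.smul_mem _ hw⟩
        rw [hTe] at hmem
        exact hmem
    · obtain ⟨w0, hw0T, hmin⟩ := hT.exists_isMinOn hTne (gfun_continuous M xb).continuousOn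
      have hw0n : ‖w0‖ = 1 := by
        have := hw0T.1
        simpa using this
      have hw0ne : w0 ≠ 0 := by
        intro h; rw [h] at hw0n; simp at hw0n
      have hδ0 : 0 < g w0 := by
        rcases lt_or_eq_of_le (gfun_nonneg M xb hM hxb.1 w0) with h | h
        · exact h
        · exfalso
          have hmem := gfun_eq_zero_mem M xb hM hxb.1 hxbpos w0 h.symm
          have : w0 = 0 := by
            have hdisj := hV.disjoint
            exact (Submodule.disjoint_def.mp hdisj) w0 hmem hw0T.2
          exact hw0ne this
      refine ⟨g w0, hδ0, fun w hw => ?_⟩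
      by_cases hw0' : w = 0
      · simp [hw0', hgdef, gfun_zero]
      · have hr : 0 < ‖w‖ := norm_pos_iff.mpr hw0'
        have hmem : ‖w‖⁻¹ • w ∈ T := ⟨hsphere_mem w hw0', V.smul_mem _ hw⟩
        have h1 : g w0 ≤ g (‖w‖⁻¹ • w) := hmin hmem
        rw [hgdef] at h1 ⊢
        rw [gfun_smul M xb _ (by positivity) w] at h1
        calc g w0 * ‖w‖ ≤ (‖w‖⁻¹ * gfun M xb w) * ‖w‖ :=
              mul_le_mul_of_nonneg_right h1 hr.le
          _ = gfun M xb w := by field_simp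
  obtain ⟨δ, hδpos, hδle⟩ := hδ
  set R : ℝ := (C - D 0) / δ + 1 with hRdef
  have hCD : D 0 ≤ C := by
    have := hcoerc 0
    have hg0 : g 0 = 0 := gfun_zero M xb
    linarith [this, hg0.le]
  have hR0 : 0 ≤ R := by
    have h : 0 ≤ (C - D 0) / δ := div_nonneg (by linarith) hδpos.le
    rw [hRdef]
    linarith
  set B : Set E := Metric.closedBall (0:E) R ∩ V with hBdef
  have hB : IsCompact B := (isCompact_closedBall (0:E) R).inter_right hVclosed
  have h0B : (0:E) ∈ B := ⟨by simpa using hR0, V.zero_mem⟩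
  obtain ⟨w, hwB, hmax⟩ := hB.exists_isMaxOn ⟨0, h0B⟩ (Dm_continuous M G ε p q).continuousOn
  refine ⟨w, fun z => ?_⟩
  show D z ≤ D w
  have hztop : z ∈ Lsub M ⊔ V := by rw [hV.sup_eq_top]; trivial
  obtain ⟨l, hl, v, hv, hlv⟩ := Submodule.mem_sup.mp hztop
  have hDzv : D z = D v := by
    rw [← hlv]
    have : (l + v).1 = l.1 + v.1 := rfl
    have h2 : (l + v).2 = l.2 + v.2 := rfl
    show Dm M G ε p q (l + v).1 (l + v).2 = Dm M G ε p q v.1 v.2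
    rw [this, h2]
    exact Dm_inv M G ε p q hM xb hxb l hl v.1 v.2
  rw [hDzv]
  by_cases hvR : ‖v‖ ≤ R
  · have : v ∈ B := ⟨by simpa [Metric.mem_closedBall, dist_zero_right] using hvR, hv⟩
    exact hmax this
  · push_neg at hvR
    have h1 : D v ≤ C - δ * ‖v‖ := by
      have := hcoerc v
      linarith [hδle v hv]
    have h2 : δ * R < δ * ‖v‖ := by
      exact mul_lt_mul_of_pos_left hvR hδpos
    have h3 : δ * R = (C - D 0) + δ := by
      rw [hRdef]
      field_simp
    have h4 : D v < D 0 := by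
      rw [h3] at h2
      linarith
    exact le_trans h4.le (hmax h0B)

lemma foc_row (M G : Matrix (Fin m) (Fin n) ℝ) (ε : ℝ) (p : Fin m → ℝ) (q : Fin n → ℝ)
    (hε : 0 < ε) (φ : Fin m → ℝ) (ψ : Fin n → ℝ) (i : Fin m)
    (hmax : ∀ t : ℝ,
      Dm M G ε p q (fun i' => if i' = i then φ i + t else φ i') ψ ≤ Dm M G ε p q φ ψ) :
    ∑ j, M i j * max (φ i + ψ j - G i j) 0 * (p i * q j) = 2 * ε * (p i) := by
  classical
  set h : ℝ → ℝ := fun t => t * p i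
      - (1/(4*ε)) * ∑ j, M i j * max (φ i + t + ψ j - G i j) 0 ^ 2 * (p i * q j) with hhdef
  have hdiff : ∀ t : ℝ,
      Dm M G ε p q (fun i' => if i' = i then φ i + t else φ i') ψ
        = Dm M G ε p q φ ψ + (h t - h 0) := by
    intro t
    unfold Dm
    have e1 : ∑ i', (if i' = i then φ i + t else φ i') * p i'
        = (∑ i', φ i' * p i') + t * p i := by
      have : ∀ i' ∈ (univ : Finset (Fin m)),
          (if i' = i then φ i + t else φ i') * p i'
            = φ i' * p i' + (if i' = i then t * p i' else 0) := by
        intro i' _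
        by_cases hii : i' = i
        · subst hii; simp; ring
        · simp [hii]
      rw [Finset.sum_congr rfl this, Finset.sum_add_distrib, Finset.sum_ite_eq' univ i
        (fun i' => t * p i')]
      simp
    have e2 : ∑ i', ∑ j, M i' j * max ((if i' = i then φ i + t else φ i') + ψ j - G i' j) 0 ^ 2
        * (p i' * q j)
        = (∑ i', ∑ j, M i' j * max (φ i' + ψ j - G i' j) 0 ^ 2 * (p i' * q j))
          + ((∑ j, M i j * max (φ i + t + ψ j - G i j) 0 ^ 2 * (p i * q j))
            - ∑ j, M i j * max (φ i + ψ j - G i j) 0 ^ 2 * (p i * q j)) := by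
      have : ∀ i' ∈ (univ : Finset (Fin m)),
          (∑ j, M i' j * max ((if i' = i then φ i + t else φ i') + ψ j - G i' j) 0 ^ 2
            * (p i' * q j))
          = (∑ j, M i' j * max (φ i' + ψ j - G i' j) 0 ^ 2 * (p i' * q j))
            + (if i' = i then
                ((∑ j, M i j * max (φ i + t + ψ j - G i j) 0 ^ 2 * (p i * q j))
                  - ∑ j, M i j * max (φ i + ψ j - G i j) 0 ^ 2 * (p i * q j)) else 0) := by
        intro i' _
        by_cases hii : i' = i
        · subst hii; simp
        · simp [hii]
      rw [Finset.sum_congr rfl this, Finset.sum_add_distrib, Finset.sum_ite_eq' univ i]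
      simp
    rw [e1, e2, hhdef]
    ring_nf
  have hle : ∀ t : ℝ, h t ≤ h 0 := by
    intro t
    have := hmax t
    rw [hdiff t] at this
    linarith
  have hlocal : IsLocalMax h 0 := Filter.Eventually.of_forall hle
  have hderiv : HasDerivAt h
      (p i - (1/(4*ε)) * ∑ j, M i j * (2 * max (φ i + ψ j - G i j) 0) * (p i * q j)) 0 := by
    have h1 : HasDerivAt (fun t : ℝ => t * p i) (p i) 0 := by
      simpa using (hasDerivAt_id (0:ℝ)).mul_const (p i)
    have h2 : HasDerivAt (fun t : ℝ =>
        ∑ j, M i j * max (φ i + t + ψ j - G i j) 0 ^ 2 * (p i * q j))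
        (∑ j, M i j * (2 * max (φ i + ψ j - G i j) 0) * (p i * q j)) 0 := by
      refine HasDerivAt.fun_sum fun j _ => ?_
      have hin : HasDerivAt (fun t : ℝ => φ i + t + ψ j - G i j) 1 0 := by
        simpa using (((hasDerivAt_id (0:ℝ)).const_add (φ i)).add_const (ψ j)).sub_const (G i j)
      have hout := (hasDerivAt_maxsq (φ i + 0 + ψ j - G i j)).comp 0 hin
      have : HasDerivAt (fun t : ℝ => max (φ i + t + ψ j - G i j) 0 ^ 2)
          (2 * max (φ i + ψ j - G i j) 0) 0 := by
        simpa [Function.comp_def] using hout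
      simpa [mul_assoc] using (this.const_mul (M i j)).mul_const (p i * q j)
    rw [hhdef]
    exact h1.sub (h2.const_mul (1/(4*ε)))
  have hzero := hlocal.deriv_eq_zero
  rw [hderiv.deriv] at hzero
  have hsum2 : ∑ j, M i j * (2 * max (φ i + ψ j - G i j) 0) * (p i * q j)
      = 2 * ∑ j, M i j * max (φ i + ψ j - G i j) 0 * (p i * q j) := by
    rw [Finset.mul_sum]
    exact Finset.sum_congr rfl fun j _ => by ring
  rw [hsum2] at hzero
  have hε4 : (4:ℝ) * ε ≠ 0 := by positivity
  generalize ∑ j, M i j * max (φ i + ψ j - G i j) 0 * (p i * q j) = S at hzero ⊢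
  field_simp at hzero
  linarith

lemma foc_col (M G : Matrix (Fin m) (Fin n) ℝ) (ε : ℝ) (p : Fin m → ℝ) (q : Fin n → ℝ)
    (hε : 0 < ε) (φ : Fin m → ℝ) (ψ : Fin n → ℝ) (j : Fin n)
    (hmax : ∀ t : ℝ,
      Dm M G ε p q φ (fun j' => if j' = j then ψ j + t else ψ j') ≤ Dm M G ε p q φ ψ) :
    ∑ i, M i j * max (φ i + ψ j - G i j) 0 * (p i * q j) = 2 * ε * (q j) := by
  classical
  set h : ℝ → ℝ := fun t => t * q j
      - (1/(4*ε)) * ∑ i, M i j * max (φ i + (ψ j + t) - G i j) 0 ^ 2 * (p i * q j) with hhdef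
  have hdiff : ∀ t : ℝ,
      Dm M G ε p q φ (fun j' => if j' = j then ψ j + t else ψ j')
        = Dm M G ε p q φ ψ + (h t - h 0) := by
    intro t
    unfold Dm
    have e1 : ∑ j', (if j' = j then ψ j + t else ψ j') * q j'
        = (∑ j', ψ j' * q j') + t * q j := by
      have : ∀ j' ∈ (univ : Finset (Fin n)),
          (if j' = j then ψ j + t else ψ j') * q j'
            = ψ j' * q j' + (if j' = j then t * q j' else 0) := by
        intro j' _
        by_cases hjj : j' = j
        · subst hjj; simp; ring
        · simp [hjj]
      rw [Finset.sum_congr rfl this, Finset.sum_add_distrib, Finset.sum_ite_eq' univ j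
        (fun j' => t * q j')]
      simp
    have e2 : ∑ i, ∑ j', M i j' * max (φ i + (if j' = j then ψ j + t else ψ j') - G i j') 0 ^ 2
        * (p i * q j')
        = (∑ i, ∑ j', M i j' * max (φ i + ψ j' - G i j') 0 ^ 2 * (p i * q j'))
          + ((∑ i, M i j * max (φ i + (ψ j + t) - G i j) 0 ^ 2 * (p i * q j))
            - ∑ i, M i j * max (φ i + ψ j - G i j) 0 ^ 2 * (p i * q j)) := by
      rw [Finset.sum_comm]
      rw [Finset.sum_comm (s := univ) (t := univ)
        (f := fun i j' => M i j' * max (φ i + ψ j' - G i j') 0 ^ 2 * (p i * q j'))]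
      have : ∀ j' ∈ (univ : Finset (Fin n)),
          (∑ i, M i j' * max (φ i + (if j' = j then ψ j + t else ψ j') - G i j') 0 ^ 2
            * (p i * q j'))
          = (∑ i, M i j' * max (φ i + ψ j' - G i j') 0 ^ 2 * (p i * q j'))
            + (if j' = j then
                ((∑ i, M i j * max (φ i + (ψ j + t) - G i j) 0 ^ 2 * (p i * q j))
                  - ∑ i, M i j * max (φ i + ψ j - G i j) 0 ^ 2 * (p i * q j)) else 0) := by
        intro j' _
        by_cases hjj : j' = j
        · subst hjj; simp
        · simp [hjj]
      rw [Finset.sum_congr rfl this, Finset.sum_add_distrib, Finset.sum_ite_eq' univ j]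
      simp
    rw [e1, e2, hhdef]
    simp only [add_zero]
    linarith
  have hle : ∀ t : ℝ, h t ≤ h 0 := by
    intro t
    have := hmax t
    rw [hdiff t] at this
    linarith
  have hlocal : IsLocalMax h 0 := Filter.Eventually.of_forall hle
  have hderiv : HasDerivAt h
      (q j - (1/(4*ε)) * ∑ i, M i j * (2 * max (φ i + ψ j - G i j) 0) * (p i * q j)) 0 := by
    have h1 : HasDerivAt (fun t : ℝ => t * q j) (q j) 0 := by
      simpa using (hasDerivAt_id (0:ℝ)).mul_const (q j)
    have h2 : HasDerivAt (fun t : ℝ =>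
        ∑ i, M i j * max (φ i + (ψ j + t) - G i j) 0 ^ 2 * (p i * q j))
        (∑ i, M i j * (2 * max (φ i + ψ j - G i j) 0) * (p i * q j)) 0 := by
      refine HasDerivAt.fun_sum fun i _ => ?_
      have hin : HasDerivAt (fun t : ℝ => φ i + (ψ j + t) - G i j) 1 0 := by
        simpa using (((hasDerivAt_id (0:ℝ)).const_add (ψ j)).const_add (φ i)).sub_const (G i j)
      have hout := (hasDerivAt_maxsq (φ i + (ψ j + 0) - G i j)).comp 0 hin
      have : HasDerivAt (fun t : ℝ => max (φ i + (ψ j + t) - G i j) 0 ^ 2)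
          (2 * max (φ i + ψ j - G i j) 0) 0 := by
        simpa [Function.comp_def] using hout
      simpa [mul_assoc] using (this.const_mul (M i j)).mul_const (p i * q j)
    rw [hhdef]
    exact h1.sub (h2.const_mul (1/(4*ε)))
  have hzero := hlocal.deriv_eq_zero
  rw [hderiv.deriv] at hzero
  have hsum2 : ∑ i, M i j * (2 * max (φ i + ψ j - G i j) 0) * (p i * q j)
      = 2 * ∑ i, M i j * max (φ i + ψ j - G i j) 0 * (p i * q j) := by
    rw [Finset.mul_sum]
    exact Finset.sum_congr rfl fun i _ => by ring
  rw [hsum2] at hzero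
  have hε4 : (4:ℝ) * ε ≠ 0 := by positivity
  generalize ∑ i, M i j * max (φ i + ψ j - G i j) 0 * (p i * q j) = S at hzero ⊢
  field_simp at hzero
  linarith

lemma master (M G : Matrix (Fin m) (Fin n) ℝ) (ε : ℝ) (p : Fin m → ℝ) (q : Fin n → ℝ)
    (hp : ∀ i, 0 < p i) (hq : ∀ j, 0 < q j) (hε : 0 < ε)
    (hM : ∀ i j, M i j = 0 ∨ M i j = 1)
    (xb : Matrix (Fin m) (Fin n) ℝ) (hxb : xb ∈ PiM M p q)
    (hxbpos : ∀ i j, M i j = 1 → 0 < xb i j) :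
    ∃ (φ : Fin m → ℝ) (ψ : Fin n → ℝ),
      (∀ (φ' : Fin m → ℝ) (ψ' : Fin n → ℝ), Dm M G ε p q φ' ψ' ≤ Dm M G ε p q φ ψ)
      ∧ Dm M G ε p q φ ψ = sInf {v | ∃ π ∈ PiM M p q, v = Pm M G ε p q π} := by
  obtain ⟨w, hw⟩ := Dm_exists_max M G ε p q hp hq hε hM xb hxb hxbpos
  set φ := w.1 with hφ
  set ψ := w.2 with hψ
  have hmaxall : ∀ (φ' : Fin m → ℝ) (ψ' : Fin n → ℝ),
      Dm M G ε p q φ' ψ' ≤ Dm M G ε p q φ ψ := fun φ' ψ' => hw (φ', ψ')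
  have hrow : ∀ i, ∑ j, M i j * max (φ i + ψ j - G i j) 0 * (p i * q j) = 2 * ε * p i :=
    fun i => foc_row M G ε p q hε φ ψ i (fun t => hmaxall _ _)
  have hcol : ∀ j, ∑ i, M i j * max (φ i + ψ j - G i j) 0 * (p i * q j) = 2 * ε * q j :=
    fun j => foc_col M G ε p q hε φ ψ j (fun t => hmaxall _ _)
  set π : Matrix (Fin m) (Fin n) ℝ :=
    fun i j => M i j * (p i * q j * max (φ i + ψ j - G i j) 0 / (2 * ε)) with hπdef
  have hπM : ∀ i j, M i j * π i j
      = M i j * max (φ i + ψ j - G i j) 0 * (p i * q j) / (2 * ε) := by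
    intro i j
    rcases hM i j with h | h
    · simp [hπdef, h]
    · simp only [hπdef, h, one_mul]
      ring
  have hπfeas : π ∈ PiM M p q := by
    refine ⟨fun i j => ?_, fun i => ?_, fun j => ?_⟩
    · rcases hM i j with h | h
      · simp [hπdef, h]
      · simp only [hπdef, h, one_mul]
        have h1 : 0 ≤ max (φ i + ψ j - G i j) 0 := le_max_right _ _
        have h2 : 0 < p i * q j := mul_pos (hp i) (hq j)
        positivity
    · rw [Finset.sum_congr rfl fun j _ => hπM i j, ← Finset.sum_div, hrow i]
      field_simp
    · rw [Finset.sum_congr rfl fun i _ => hπM i j, ← Finset.sum_div, hcol j]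
      field_simp
  have hval : Dm M G ε p q φ ψ = Pm M G ε p q π := by
    unfold Dm Pm
    rw [linrw M p q π hπfeas φ ψ, Finset.mul_sum, Finset.mul_sum, ← Finset.sum_sub_distrib,
      ← Finset.sum_add_distrib]
    refine Finset.sum_congr rfl fun i _ => ?_
    rw [Finset.mul_sum, Finset.mul_sum, ← Finset.sum_sub_distrib, ← Finset.sum_add_distrib]
    refine Finset.sum_congr rfl fun j _ => ?_
    rcases hM i j with h | h
    · simp [hπdef, h]
    · simp only [hπdef, h, one_mul]
      rcases le_or_gt (φ i + ψ j - G i j) 0 with ht | ht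
      · rw [max_eq_right ht]
        simp
      · rw [max_eq_left ht.le]
        have hc : (p i * q j) ≠ 0 := (mul_pos (hp i) (hq j)).ne'
        field_simp
        ring
  refine ⟨φ, ψ, hmaxall, ?_⟩
  have hSne : {v | ∃ π' ∈ PiM M p q, v = Pm M G ε p q π'}.Nonempty :=
    ⟨Pm M G ε p q π, π, hπfeas, rfl⟩
  apply le_antisymm
  · refine le_csInf hSne ?_
    rintro b ⟨π', hπ', rfl⟩
    exact weak_dual M G ε p q hp hq hε hM φ ψ π' hπ'
  · have hbdd : BddBelow {v | ∃ π' ∈ PiM M p q, v = Pm M G ε p q π'} := by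
      refine ⟨Dm M G ε p q φ ψ, ?_⟩
      rintro b ⟨π', hπ', rfl⟩
      exact weak_dual M G ε p q hp hq hε hM φ ψ π' hπ'
    have := csInf_le hbdd ⟨π, hπfeas, rfl⟩
    rw [hval]
    exact this


/-- Strong duality for L₂-regularized KPG-RL: the primal optimal
value equals the dual optimal value, and the dual supremum is attained. -/
theorem kpg_rl_L2_strong_duality
    (p : Fin m → ℝ) (q : Fin n → ℝ) (K : Finset (Fin m × Fin n))
    (G : Matrix (Fin m) (Fin n) ℝ) (ε : ℝ)
    (hp : ∀ i, 0 < p i) (hps : ∑ i, p i = 1)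
    (hq : ∀ j, 0 < q j) (hqs : ∑ j, q j = 1)
    (hK1 : ∀ a ∈ K, ∀ b ∈ K, a.1 = b.1 → a = b)
    (hK2 : ∀ a ∈ K, ∀ b ∈ K, a.2 = b.2 → a = b)
    (hε : 0 < ε) (hne : (PiM (mask K) p q).Nonempty) :
    ∃ (φ : Fin m → ℝ) (ψ : Fin n → ℝ),
      (∀ (φ' : Fin m → ℝ) (ψ' : Fin n → ℝ),
        dualObj K G ε p q φ' ψ' ≤ dualObj K G ε p q φ ψ)
      ∧ dualObj K G ε p q φ ψ
          = sInf {v | ∃ π ∈ PiM (mask K) p q, v = primObj K G ε p q π} := by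
  classical
  set M := mask K with hMdef
  have hM : ∀ i j, M i j = 0 ∨ M i j = 1 := by
    intro i j
    rw [hMdef]
    unfold mask
    split_ifs <;> simp
  obtain ⟨π0, hπ0⟩ := hne
  -- structural facts about the mask
  have mask_row_key : ∀ i j0, (i, j0) ∈ K → ∀ j, M i j = if j = j0 then 1 else 0 := by
    intro i j0 hk j
    by_cases hj : j = j0
    · subst hj
      rw [hMdef]; unfold mask
      rw [if_pos hk, if_pos rfl]
    · have hnk : (i, j) ∉ K := by
        intro hmem
        have := hK1 (i, j) hmem (i, j0) hk rfl
        simp only [Prod.mk.injEq] at this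
        exact hj this.2
      rw [hMdef]; unfold mask
      rw [if_neg hnk, if_pos (Or.inl ⟨j0, hk⟩), if_neg hj]
  have mask_col_key : ∀ i0 j, (i0, j) ∈ K → ∀ i, M i j = if i = i0 then 1 else 0 := by
    intro i0 j hk i
    by_cases hi : i = i0
    · subst hi
      rw [hMdef]; unfold mask
      rw [if_pos hk, if_pos rfl]
    · have hnk : (i, j) ∉ K := by
        intro hmem
        have := hK2 (i, j) hmem (i0, j) hk rfl
        simp only [Prod.mk.injEq] at this
        exact hi this.1
      rw [hMdef]; unfold mask
      rw [if_neg hnk, if_pos (Or.inr ⟨i0, hk⟩), if_neg hi]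
  have mask_rowblock : ∀ i j, ¬(∃ j', (i, j') ∈ K) →
      M i j = if (∃ i', (i', j) ∈ K) then 0 else 1 := by
    intro i j hI
    have hnk : (i, j) ∉ K := fun hmem => hI ⟨j, hmem⟩
    rw [hMdef]; unfold mask
    rw [if_neg hnk]
    by_cases hJ : ∃ i', (i', j) ∈ K
    · rw [if_pos (Or.inr hJ), if_pos hJ]
    · rw [if_neg (by tauto), if_neg hJ]
  have mask_colblock : ∀ i j, ¬(∃ i', (i', j) ∈ K) →
      M i j = if (∃ j', (i, j') ∈ K) then 0 else 1 := by
    intro i j hJ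
    have hnk : (i, j) ∉ K := fun hmem => hJ ⟨i, hmem⟩
    rw [hMdef]; unfold mask
    rw [if_neg hnk]
    by_cases hI : ∃ j', (i, j') ∈ K
    · rw [if_pos (Or.inl hI), if_pos hI]
    · rw [if_neg (by tauto), if_neg hI]
  -- row/column sums for rows/columns containing a keypoint
  have rowsum_key : ∀ i j0, (i, j0) ∈ K → π0 i j0 = p i := by
    intro i j0 hk
    have := hπ0.2.1 i
    rw [Finset.sum_congr rfl fun j _ => by rw [mask_row_key i j0 hk j]] at this
    simp only [ite_mul, one_mul, zero_mul] at this
    rw [Finset.sum_ite_eq' univ j0 (fun j => π0 i j)] at this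
    simpa using this
  have colsum_key : ∀ i0 j, (i0, j) ∈ K → π0 i0 j = q j := by
    intro i0 j hk
    have := hπ0.2.2 j
    rw [Finset.sum_congr rfl fun i _ => by rw [mask_col_key i0 j hk i]] at this
    simp only [ite_mul, one_mul, zero_mul] at this
    rw [Finset.sum_ite_eq' univ i0 (fun i => π0 i j)] at this
    simpa using this
  have key_pq : ∀ i j, (i, j) ∈ K → p i = q j := by
    intro i j hk
    rw [← rowsum_key i j hk, colsum_key i j hk]
  -- the free mass
  set s : ℝ := ∑ i, if (∃ j', (i, j') ∈ K) then 0 else p i with hsdef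
  have hs_eq : s = ∑ j, if (∃ i', (i', j) ∈ K) then 0 else q j := by
    have hA : s = ∑ i, ∑ j, (if (∃ j', (i, j') ∈ K) ∨ (∃ i', (i', j) ∈ K)
        then 0 else π0 i j) := by
      rw [hsdef]
      refine Finset.sum_congr rfl fun i _ => ?_
      by_cases hI : ∃ j', (i, j') ∈ K
      · rw [if_pos hI]
        rw [Finset.sum_congr rfl fun j _ => if_pos (Or.inl hI)]
        simp
      · rw [if_neg hI, ← hπ0.2.1 i]
        refine Finset.sum_congr rfl fun j _ => ?_
        rw [mask_rowblock i j hI]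
        by_cases hJ : ∃ i', (i', j) ∈ K
        · rw [if_pos hJ, if_pos (Or.inr hJ), zero_mul]
        · rw [if_neg hJ, if_neg (by tauto), one_mul]
    have hB : (∑ j, if (∃ i', (i', j) ∈ K) then 0 else q j)
        = ∑ j, ∑ i, (if (∃ j', (i, j') ∈ K) ∨ (∃ i', (i', j) ∈ K)
          then 0 else π0 i j) := by
      refine Finset.sum_congr rfl fun j _ => ?_
      by_cases hJ : ∃ i', (i', j) ∈ K
      · rw [if_pos hJ]
        rw [Finset.sum_congr rfl fun i _ => if_pos (Or.inr hJ)]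
        simp
      · rw [if_neg hJ, ← hπ0.2.2 j]
        refine Finset.sum_congr rfl fun i _ => ?_
        rw [mask_colblock i j hJ]
        by_cases hI : ∃ j', (i, j') ∈ K
        · rw [if_pos hI, if_pos (Or.inl hI), zero_mul]
        · rw [if_neg hI, if_neg (by tauto), one_mul]
    rw [hA, hB, Finset.sum_comm]
  have hs0 : 0 ≤ s := by
    rw [hsdef]
    refine Finset.sum_nonneg fun i _ => ?_
    split_ifs
    · exact le_refl 0
    · exact (hp i).le
  have spos_row : ∀ i, ¬(∃ j', (i, j') ∈ K) → 0 < s := by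
    intro i hI
    have h1 : (if (∃ j', (i, j') ∈ K) then 0 else p i) ≤ s := by
      rw [hsdef]
      refine Finset.single_le_sum (f := fun i' => if (∃ j', (i', j') ∈ K) then 0 else p i')
        (fun i' _ => ?_) (Finset.mem_univ i)
      split_ifs
      · exact le_refl 0
      · exact (hp i').le
    rw [if_neg hI] at h1
    exact lt_of_lt_of_le (hp i) h1
  have spos_col : ∀ j, ¬(∃ i', (i', j) ∈ K) → 0 < s := by
    intro j hJ
    have h1 : (if (∃ i', (i', j) ∈ K) then 0 else q j)
        ≤ ∑ j', if (∃ i', (i', j') ∈ K) then 0 else q j' := by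
      refine Finset.single_le_sum (f := fun j' => if (∃ i', (i', j') ∈ K) then 0 else q j')
        (fun j' _ => ?_) (Finset.mem_univ j)
      split_ifs
      · exact le_refl 0
      · exact (hq j').le
    rw [if_neg hJ] at h1
    rw [hs_eq]
    exact lt_of_lt_of_le (hq j) h1
  -- the strictly positive feasible plan
  set xb : Matrix (Fin m) (Fin n) ℝ := fun i j =>
    if (i, j) ∈ K then p i
    else if (∃ j', (i, j') ∈ K) ∨ (∃ i', (i', j) ∈ K) then 0
    else p i * q j / s with hxbdef
  have hxbnn : ∀ i j, 0 ≤ xb i j := by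
    intro i j
    simp only [hxbdef]
    split_ifs with h1 h2
    · exact (hp i).le
    · exact le_refl 0
    · exact div_nonneg (mul_nonneg (hp i).le (hq j).le) hs0
  have hxbpos : ∀ i j, M i j = 1 → 0 < xb i j := by
    intro i j h1
    by_cases hk : (i, j) ∈ K
    · simp only [hxbdef, if_pos hk]
      exact hp i
    · have hD : ¬((∃ j', (i, j') ∈ K) ∨ (∃ i', (i', j) ∈ K)) := by
        intro hD
        rw [hMdef] at h1
        unfold mask at h1
        rw [if_neg hk, if_pos hD] at h1
        norm_num at h1
      simp only [hxbdef, if_neg hk, if_neg hD]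
      have hspos : 0 < s := spos_row i (fun h => hD (Or.inl h))
      exact div_pos (mul_pos (hp i) (hq j)) hspos
  have hxbrow : ∀ i, ∑ j, M i j * xb i j = p i := by
    intro i
    by_cases hI : ∃ j', (i, j') ∈ K
    · obtain ⟨j0, hj0⟩ := hI
      rw [Finset.sum_congr rfl fun j _ => by rw [mask_row_key i j0 hj0 j]]
      simp only [ite_mul, one_mul, zero_mul]
      rw [Finset.sum_ite_eq' univ j0 (fun j => xb i j)]
      simp only [Finset.mem_univ, if_pos]
      simp only [hxbdef, if_pos hj0]
    · have hspos : 0 < s := spos_row i hI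
      have e1 : ∀ j, M i j * xb i j = if (∃ i', (i', j) ∈ K) then 0
          else p i * q j / s := by
        intro j
        rw [mask_rowblock i j hI]
        by_cases hJ : ∃ i', (i', j) ∈ K
        · rw [if_pos hJ, if_pos hJ, zero_mul]
        · rw [if_neg hJ, if_neg hJ, one_mul]
          have hnk : (i, j) ∉ K := fun hmem => hI ⟨j, hmem⟩
          simp only [hxbdef, if_neg hnk, if_neg (show ¬((∃ j', (i, j') ∈ K) ∨ (∃ i', (i', j) ∈ K))
            by tauto)]
      rw [Finset.sum_congr rfl fun j _ => e1 j]
      have e2 : ∀ j, (if (∃ i', (i', j) ∈ K) then 0 else p i * q j / s)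
          = (p i / s) * (if (∃ i', (i', j) ∈ K) then 0 else q j) := by
        intro j
        split_ifs
        · ring
        · ring
      rw [Finset.sum_congr rfl fun j _ => e2 j, ← Finset.mul_sum, ← hs_eq]
      field_simp
  have hxbcol : ∀ j, ∑ i, M i j * xb i j = q j := by
    intro j
    by_cases hJ : ∃ i', (i', j) ∈ K
    · obtain ⟨i0, hi0⟩ := hJ
      rw [Finset.sum_congr rfl fun i _ => by rw [mask_col_key i0 j hi0 i]]
      simp only [ite_mul, one_mul, zero_mul]
      rw [Finset.sum_ite_eq' univ i0 (fun i => xb i j)]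
      simp only [Finset.mem_univ, if_pos]
      simp only [hxbdef, if_pos hi0]
      exact key_pq i0 j hi0
    · have hspos : 0 < s := spos_col j hJ
      have e1 : ∀ i, M i j * xb i j = if (∃ j', (i, j') ∈ K) then 0
          else p i * q j / s := by
        intro i
        rw [mask_colblock i j hJ]
        by_cases hI : ∃ j', (i, j') ∈ K
        · rw [if_pos hI, if_pos hI, zero_mul]
        · rw [if_neg hI, if_neg hI, one_mul]
          have hnk : (i, j) ∉ K := fun hmem => hJ ⟨i, hmem⟩
          simp only [hxbdef, if_neg hnk, if_neg (show ¬((∃ j', (i, j') ∈ K) ∨ (∃ i', (i', j) ∈ K))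
            by tauto)]
      rw [Finset.sum_congr rfl fun i _ => e1 i]
      have e2 : ∀ i, (if (∃ j', (i, j') ∈ K) then 0 else p i * q j / s)
          = (q j / s) * (if (∃ j', (i, j') ∈ K) then 0 else p i) := by
        intro i
        split_ifs
        · ring
        · ring
      rw [Finset.sum_congr rfl fun i _ => e2 i, ← Finset.mul_sum, ← hsdef]
      field_simp
  have hxbfeas : xb ∈ PiM M p q := ⟨hxbnn, hxbrow, hxbcol⟩
  obtain ⟨φ, ψ, h1, h2⟩ := master M G ε p q hp hq hε hM xb hxbfeas hxbpos
  exact ⟨φ, ψ, h1, h2⟩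
end
end

section
/- (Optimality of the Sinkhorn scaling form for entropy-regularized KPG-RL.) Let p ∈ Σ_m, q ∈ Σ_n, M ∈ {0,1}^{m×n} a mask matrix, G ∈ ℝ^{m×n}, and ε > 0. Define K̂ ∈ ℝ_{≥0}^{m×n} by K̂_{i,j} = M_{i,j} e^{−G_{i,j}/ε}. Suppose there exist vectors u ∈ ℝ_{>0}^m and v ∈ ℝ_{>0}^n such that the matrix π* = diag(u) K̂ diag(v) satisfies π* 1_n = p and (π*)^T 1_m = q. Then M⊙π* = π*, π* ∈ Π(p,q;M), and π* minimizes the entropy-regularized objective ⟨M⊙π, G⟩_F − ε H(M⊙π) over all π ∈ Π(p,q;M), where H(T) = −Σ_{i,j}(T_{i,j} log T_{i,j} − T_{i,j}) with the convention 0·log 0 = 0, and ⟨·,·⟩_F is the Frobenius inner product. -/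
/-!
The objective is a sum of the convex functions `t ↦ t g + ε (t log t - t)` evaluated at the
masked entries, and the derivative of the summand at `π*_{ij} = u_i e^{-G_{ij}/ε} v_j` is
`ε (log u_i + log v_j)`. The first-order convexity inequality at `π*` therefore bounds the
objective at any feasible `π` below by its value at `π*` plus the masked correction
`ε Σ (log u_i + log v_j)(π_{ij} - π*_{ij})`, which vanishes because `π` and `π*` have the
same row and column sums.
-/

open Finset

noncomputable section

variable {m n : ℕ}

/-- The entropy-regularized KPG-RL objective `⟨M ⊙ π, G⟩_F − ε H(M ⊙ π)`, with
`H(T) = −Σ_{i,j} (T_{i,j} log T_{i,j} − T_{i,j})` (and `0 · log 0 = 0`, which is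
`Real.log 0 = 0` in Lean). -/
def entObj (M G : Matrix (Fin m) (Fin n) ℝ) (ε : ℝ)
    (π : Matrix (Fin m) (Fin n) ℝ) : ℝ :=
  ∑ i, ∑ j, M i j * π i j * G i j
    + ε * ∑ i, ∑ j,
        (M i j * π i j * Real.log (M i j * π i j) - M i j * π i j)

namespace SinkhornForm

lemma mul_log_sub_self_le {s t : ℝ} (hs : 0 < s) (ht : 0 ≤ t) :
    t * Real.log s - s ≤ t * Real.log t - t := by
  rcases ht.eq_or_lt with rfl | ht
  · simpa using hs.le
  · have h := mul_le_mul_of_nonneg_left (Real.log_le_sub_one_of_pos (div_pos hs ht)) ht.le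
    rw [Real.log_div hs.ne' ht.ne', mul_sub t (s / t), mul_one, mul_div_cancel₀ _ ht.ne'] at h
    linarith

def entTerm (ε g t : ℝ) : ℝ := t * g + ε * (t * Real.log t - t)

/-- `g + ε log s` is the derivative of `entTerm ε g` at `s`, so this is the first-order
convexity inequality. -/
lemma entTerm_add_deriv_mul_sub_le {ε g s t : ℝ} (hε : 0 ≤ ε) (hs : 0 < s) (ht : 0 ≤ t) :
    entTerm ε g s + (g + ε * Real.log s) * (t - s) ≤ entTerm ε g t := by
  have h := mul_le_mul_of_nonneg_left (mul_log_sub_self_le hs ht) hε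
  unfold entTerm
  linarith

lemma entObj_eq_sum_entTerm (M G : Matrix (Fin m) (Fin n) ℝ) (ε : ℝ)
    (π : Matrix (Fin m) (Fin n) ℝ) :
    entObj M G ε π = ∑ i, ∑ j, entTerm ε (G i j) (M i j * π i j) := by
  simp only [entObj, entTerm, mul_sum, ← sum_add_distrib]

lemma sum_sum_add_mul_eq_zero {ι κ : Type*} [Fintype ι] [Fintype κ]
    (a : ι → ℝ) (b : κ → ℝ) (D : ι → κ → ℝ)
    (hrow : ∀ i, ∑ j, D i j = 0) (hcol : ∀ j, ∑ i, D i j = 0) :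
    ∑ i, ∑ j, (a i + b j) * D i j = 0 := by
  simp only [add_mul, sum_add_distrib, ← mul_sum, hrow, mul_zero, zero_add]
  rw [sum_comm]
  simp only [← mul_sum, hcol, mul_zero, sum_const_zero]

/-- The Sinkhorn scaling form `diag(u) K̂ diag(v)` with `K̂_{ij} = M_{ij} e^{-G_{ij}/ε}`. -/
def sinkhornPlan (M G : Matrix (Fin m) (Fin n) ℝ) (ε : ℝ) (u : Fin m → ℝ)
    (v : Fin n → ℝ) :
    Matrix (Fin m) (Fin n) ℝ :=
  fun i j => u i * (M i j * Real.exp (-(G i j) / ε)) * v j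

section SinkhornPlan

variable {M G : Matrix (Fin m) (Fin n) ℝ} {ε : ℝ} {u : Fin m → ℝ} {v : Fin n → ℝ}
  {i : Fin m} {j : Fin n}

lemma mask_mul_sinkhornPlan (hMij : M i j = 0 ∨ M i j = 1) :
    M i j * sinkhornPlan M G ε u v i j = sinkhornPlan M G ε u v i j := by
  rcases hMij with h | h <;> simp [sinkhornPlan, h]

lemma sinkhornPlan_nonneg (hMij : 0 ≤ M i j) (hui : 0 < u i) (hvj : 0 < v j) :
    0 ≤ sinkhornPlan M G ε u v i j := by
  unfold sinkhornPlan
  positivity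

lemma sinkhornPlan_mem_PiM {p : Fin m → ℝ} {q : Fin n → ℝ}
    (hM : ∀ i j, M i j = 0 ∨ M i j = 1) (hu : ∀ i, 0 < u i) (hv : ∀ j, 0 < v j)
    (hrow : ∀ i, ∑ j, sinkhornPlan M G ε u v i j = p i)
    (hcol : ∀ j, ∑ i, sinkhornPlan M G ε u v i j = q j) :
    sinkhornPlan M G ε u v ∈ PiM M p q := by
  have hM₀ : ∀ i j, 0 ≤ M i j := fun i j => by rcases hM i j with h | h <;> simp [h]
  refine ⟨fun i j => sinkhornPlan_nonneg (hM₀ i j) (hu i) (hv j), fun i => ?_, fun j => ?_⟩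
  · simpa only [mask_mul_sinkhornPlan (hM _ _)] using hrow i
  · simpa only [mask_mul_sinkhornPlan (hM _ _)] using hcol j

lemma cost_add_mul_log_sinkhornPlan (hε : ε ≠ 0) (hui : 0 < u i) (hvj : 0 < v j)
    (hMij : M i j = 1) :
    G i j + ε * Real.log (sinkhornPlan M G ε u v i j)
      = ε * (Real.log (u i) + Real.log (v j)) := by
  simp only [sinkhornPlan, hMij, one_mul]
  rw [Real.log_mul (by positivity) hvj.ne', Real.log_mul hui.ne' (Real.exp_pos _).ne',
    Real.log_exp]
  field_simp
  ring

lemma entTerm_sinkhornPlan_add_le (hMij : M i j = 0 ∨ M i j = 1) (hε : 0 < ε)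
    (hui : 0 < u i) (hvj : 0 < v j) {t : ℝ} (ht : 0 ≤ t) :
    entTerm ε (G i j) (M i j * sinkhornPlan M G ε u v i j)
        + ε * (Real.log (u i) + Real.log (v j)) * (M i j * t - M i j * sinkhornPlan M G ε u v i j)
      ≤ entTerm ε (G i j) (M i j * t) := by
  rcases hMij with h | h
  · simp [entTerm, h]
  · have hS : 0 < sinkhornPlan M G ε u v i j := by
      simp only [sinkhornPlan, h]
      positivity
    rw [h, one_mul, one_mul, ← cost_add_mul_log_sinkhornPlan hε.ne' hui hvj h]
    exact entTerm_add_deriv_mul_sub_le hε.le hS ht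

lemma entObj_sinkhornPlan_le {p : Fin m → ℝ} {q : Fin n → ℝ}
    (hM : ∀ i j, M i j = 0 ∨ M i j = 1) (hε : 0 < ε) (hu : ∀ i, 0 < u i)
    (hv : ∀ j, 0 < v j) (hrow : ∀ i, ∑ j, sinkhornPlan M G ε u v i j = p i)
    (hcol : ∀ j, ∑ i, sinkhornPlan M G ε u v i j = q j)
    {π : Matrix (Fin m) (Fin n) ℝ} (hπ : π ∈ PiM M p q) :
    entObj M G ε (sinkhornPlan M G ε u v) ≤ entObj M G ε π := by
  obtain ⟨hπ₀, hπrow, hπcol⟩ := hπ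
  set D : Fin m → Fin n → ℝ := fun i j => M i j * π i j - M i j * sinkhornPlan M G ε u v i j
  have hDrow : ∀ i, ∑ j, D i j = 0 := fun i => by
    simp only [D, sum_sub_distrib, hπrow, mask_mul_sinkhornPlan (hM _ _), hrow, sub_self]
  have hDcol : ∀ j, ∑ i, D i j = 0 := fun j => by
    simp only [D, sum_sub_distrib, hπcol, mask_mul_sinkhornPlan (hM _ _), hcol, sub_self]
  have hcorr : ∑ i, ∑ j, ε * (Real.log (u i) + Real.log (v j)) * D i j = 0 := by
    simp only [mul_assoc, ← mul_sum, sum_sum_add_mul_eq_zero _ _ D hDrow hDcol, mul_zero]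
  rw [entObj_eq_sum_entTerm, entObj_eq_sum_entTerm]
  calc ∑ i, ∑ j, entTerm ε (G i j) (M i j * sinkhornPlan M G ε u v i j)
      = ∑ i, ∑ j, (entTerm ε (G i j) (M i j * sinkhornPlan M G ε u v i j)
          + ε * (Real.log (u i) + Real.log (v j)) * D i j) := by
        simp only [sum_add_distrib, hcorr, add_zero]
    _ ≤ ∑ i, ∑ j, entTerm ε (G i j) (M i j * π i j) :=
        sum_le_sum fun i _ => sum_le_sum fun j _ =>
          entTerm_sinkhornPlan_add_le (hM i j) hε (hu i) (hv j) (hπ₀ i j)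

end SinkhornPlan

end SinkhornForm

open SinkhornForm in
theorem sinkhorn_form_optimal_general
    (p : Fin m → ℝ) (q : Fin n → ℝ)
    (M G : Matrix (Fin m) (Fin n) ℝ) (ε : ℝ)
    (hM : ∀ i j, M i j = 0 ∨ M i j = 1) (hε : 0 < ε)
    (u : Fin m → ℝ) (v : Fin n → ℝ)
    (hu : ∀ i, 0 < u i) (hv : ∀ j, 0 < v j)
    (hrow : ∀ i, ∑ j, u i * (M i j * Real.exp (-(G i j) / ε)) * v j = p i)
    (hcol : ∀ j, ∑ i, u i * (M i j * Real.exp (-(G i j) / ε)) * v j = q j) :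
    (∀ i j, M i j * (u i * (M i j * Real.exp (-(G i j) / ε)) * v j)
        = u i * (M i j * Real.exp (-(G i j) / ε)) * v j)
    ∧ (fun i j => u i * (M i j * Real.exp (-(G i j) / ε)) * v j) ∈ PiM M p q
    ∧ ∀ π ∈ PiM M p q,
        entObj M G ε (fun i j => u i * (M i j * Real.exp (-(G i j) / ε)) * v j)
          ≤ entObj M G ε π :=
  ⟨fun i j => mask_mul_sinkhornPlan (hM i j),
    sinkhornPlan_mem_PiM hM hu hv hrow hcol,
    fun _ hπ => entObj_sinkhornPlan_le hM hε hu hv hrow hcol hπ⟩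

/-- Optimality of the Sinkhorn scaling form for entropy-regularized
KPG-RL: if `π* = diag(u) K̂ diag(v)` with `u, v > 0` and
`K̂_{i,j} = M_{i,j} e^{−G_{i,j}/ε}` has marginals `p` and `q`, then `M ⊙ π* = π*`,
`π* ∈ Π(p,q;M)`, and `π*` minimizes the entropy-regularized objective over
`Π(p,q;M)`. -/
theorem sinkhorn_form_optimal
    (p : Fin m → ℝ) (q : Fin n → ℝ)
    (M G : Matrix (Fin m) (Fin n) ℝ) (ε : ℝ)
    (hps : p ∈ stdSimplex ℝ (Fin m)) (hqs : q ∈ stdSimplex ℝ (Fin n))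
    (hM : ∀ i j, M i j = 0 ∨ M i j = 1) (hε : 0 < ε)
    (u : Fin m → ℝ) (v : Fin n → ℝ)
    (hu : ∀ i, 0 < u i) (hv : ∀ j, 0 < v j)
    (hrow : ∀ i, ∑ j, u i * (M i j * Real.exp (-(G i j) / ε)) * v j = p i)
    (hcol : ∀ j, ∑ i, u i * (M i j * Real.exp (-(G i j) / ε)) * v j = q j) :
    (∀ i j, M i j * (u i * (M i j * Real.exp (-(G i j) / ε)) * v j)
        = u i * (M i j * Real.exp (-(G i j) / ε)) * v j)
    ∧ (fun i j => u i * (M i j * Real.exp (-(G i j) / ε)) * v j) ∈ PiM M p q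
    ∧ ∀ π ∈ PiM M p q,
        entObj M G ε (fun i j => u i * (M i j * Real.exp (-(G i j) / ε)) * v j)
          ≤ entObj M G ε π :=
  sinkhorn_form_optimal_general p q M G ε hM hε u v hu hv hrow hcol
end
end
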